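/- arXiv:1704.00220 — 5 statements merged into one kernel-verified Lean document; each statement's English description precedes it below -/
import Mathlib

section
/- Let T ⊆ 2^{<ω} be a tree with coding nodes (c_n)_{n<N} coding a countable graph G, and assume the coding nodes are dense in T (every node of T has an extension to a coding node). Then G is triangle-free if and only if T satisfies the Triangle-Free Criterion: for each t ∈ T, if l_n < |t| and t(l_i) = c_n(l_i) = 1 for some i < n, then t(l_n) = 0. -/
/-- The passing number of a node `t ∈ 2^{<ω}` at level `l` is the value `t(l)`. -/
def pn (t : List Bool) (l : ℕ) : Bool := t.getD l false

/-- The meet of two nodes of `2^{<ω}`: their longest common initial segment. -/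
def meet : List Bool → List Bool → List Bool
  | a :: as, b :: bs => if a = b then a :: meet as bs else []
  | _, _ => []

/-- A tree is a subset of `2^{<ω}` closed under meets and level restrictions. -/
def IsTree (S : Set (List Bool)) : Prop :=
  (∀ s ∈ S, ∀ t ∈ S, meet s t ∈ S) ∧
  (∀ s ∈ S, ∀ t ∈ S, s.length ≤ t.length → t.take s.length ∈ S)

lemma pn_prefix {t s : List Bool} (h : t <+: s) {l : ℕ} (hl : l < t.length) :
    pn s l = pn t l := by
  unfold pn
  rw [List.getD_eq_getElem _ _ hl, List.getD_eq_getElem _ _ (lt_of_lt_of_le hl h.length_le)]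
  exact (h.getElem hl).symm

/-- Let `T` be a tree with coding nodes `(c n)_{n<N}` coding a countable
graph `G` (with vertex enumeration `v`), and assume the coding nodes are dense in `T`.
Then `G` is triangle-free if and only if `T` satisfies the Triangle-Free Criterion. -/
theorem triangle_free_iff_TFC {V : Type} (G : SimpleGraph V) (v : ℕ → V)
    (T : Set (List Bool)) (hT : IsTree T)
    (N : ℕ∞) (c : ℕ → List Bool)
    (hc_mem : ∀ n : ℕ, (n : ℕ∞) < N → c n ∈ T)
    (hc_len : ∀ m n : ℕ, m < n → (n : ℕ∞) < N → (c m).length < (c n).length)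
    (hv_enum : ∀ x : V, ∃ n : ℕ, (n : ℕ∞) < N ∧ v n = x)
    (hv_inj : ∀ m n : ℕ, (m : ℕ∞) < N → (n : ℕ∞) < N → v m = v n → m = n)
    (hcode : ∀ i n : ℕ, i < n → (n : ℕ∞) < N →
      (G.Adj (v n) (v i) ↔ pn (c n) (c i).length = true))
    (hdense : ∀ t ∈ T, ∃ n : ℕ, (n : ℕ∞) < N ∧ t <+: c n) :
    G.CliqueFree 3 ↔
      (∀ t ∈ T, ∀ n : ℕ, (n : ℕ∞) < N → (c n).length < t.length →
        (∃ i < n, pn t (c i).length = true ∧ pn (c n) (c i).length = true) →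
        pn t (c n).length = false) := by
  classical
  have castlt : ∀ {a b : ℕ}, a < b → (b : ℕ∞) < N → (a : ℕ∞) < N := by
    intro a b hab hb
    exact lt_trans (by exact_mod_cast hab) hb
  -- key: no "triangle indices"
  constructor
  · intro hCF t ht n hn hlen ⟨i, hin, hti, hcni⟩
    by_contra hfalse
    have htn : pn t (c n).length = true := by
      cases h : pn t (c n).length with
      | false => exact absurd h hfalse
      | true => rfl
    obtain ⟨m, hm, hpre⟩ := hdense t ht
    have hiN : (i : ℕ∞) < N := castlt hin hn
    have hlin : (c i).length < (c n).length := hc_len i n hin hn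
    have hnm : n < m := by
      rcases lt_trichotomy n m with h | h | h
      · exact h
      · subst h; exact absurd (lt_of_lt_of_le hlen hpre.length_le) (lt_irrefl _)
      · exact absurd (lt_trans (hc_len m n h hn) (lt_of_lt_of_le hlen hpre.length_le))
          (lt_irrefl _)
    have him : i < m := lt_trans hin hnm
    have h1 : G.Adj (v m) (v n) := by
      rw [hcode n m hnm hm, pn_prefix hpre hlen]; exact htn
    have h2 : G.Adj (v m) (v i) := by
      rw [hcode i m him hm, pn_prefix hpre (lt_trans hlin hlen)]; exact hti
    have h3 : G.Adj (v n) (v i) := (hcode i n hin hn).2 hcni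
    exact hCF {v m, v n, v i} (SimpleGraph.is3Clique_triple_iff.2 ⟨h1, h2, h3⟩)
  · intro hTFC s hs
    obtain ⟨x, y, z, hxy, hxz, hyz, rfl⟩ := SimpleGraph.is3Clique_iff.1 hs
    obtain ⟨a, ha, rfl⟩ := hv_enum x
    obtain ⟨b, hb, rfl⟩ := hv_enum y
    obtain ⟨d, hd, rfl⟩ := hv_enum z
    -- pairwise distinct indices
    have key : ∀ i n m : ℕ, i < n → n < m → (i : ℕ∞) < N → (n : ℕ∞) < N → (m : ℕ∞) < N →
        G.Adj (v m) (v n) → G.Adj (v m) (v i) → G.Adj (v n) (v i) → False := by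
      intro i n m hin hnm hi hn hm amn ami ani
      have hfin : pn (c m) (c n).length = false :=
        hTFC (c m) (hc_mem m hm) n hn (hc_len n m hnm hm)
          ⟨i, hin, (hcode i m (lt_trans hin hnm) hm).1 ami, (hcode i n hin hn).1 ani⟩
      have : pn (c m) (c n).length = true := (hcode n m hnm hm).1 amn
      rw [this] at hfin; simp at hfin
    have hab : a ≠ b := fun h => hxy.ne (by rw [h])
    have had : a ≠ d := fun h => hxz.ne (by rw [h])
    have hbd : b ≠ d := fun h => hyz.ne (by rw [h])
    rcases lt_trichotomy a b with h1 | h1 | h1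
    · rcases lt_trichotomy b d with h2 | h2 | h2
      · exact key a b d h1 h2 ha hb hd hyz.symm hxz.symm hxy.symm
      · exact hbd h2
      · rcases lt_trichotomy a d with h3 | h3 | h3
        · exact key a d b h3 h2 ha hd hb hyz hxy.symm hxz.symm
        · exact had h3
        · exact key d a b h3 h1 hd ha hb hxy.symm hyz hxz
    · exact hab h1
    · rcases lt_trichotomy a d with h2 | h2 | h2
      · exact key b a d h1 h2 hb ha hd hxz.symm hyz.symm hxy
      · exact had h2
      · rcases lt_trichotomy b d with h3 | h3 | h3
        · exact key b d a h3 h2 hb hd ha hxz hxy hyz.symm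
        · exact hbd h3
        · exact key d b a h3 h1 hd hb ha hxy hxz hyz
end

section
/- There exists an infinite strong triangle-free tree S ⊆ 2^{<ω}, with coding nodes dense in S, whose coding nodes code the universal homogeneous triangle-free graph H₃. More precisely, S satisfies property (A₃)^tree: S satisfies the Triangle-Free Criterion, and for any enumeration (F_i)_{i<ω} of finite subsets of ω with max(F_i) < i and each finite set appearing infinitely often, for each i, if c_k(l_j) = 0 for all pairs j < k in F_i, then there is n ≥ i such that for all m < i, c_n(l_m) = 1 ↔ m ∈ F_i. -/
/-- Two nodes have parallel 1's if they both take value `1` at some common level. -/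
def ParallelOnes (s t : List Bool) : Prop :=
  ∃ l : ℕ, l < s.length ∧ l < t.length ∧ pn s l = true ∧ pn t l = true

/-- An infinite strong triangle-free tree, with coding nodes `c n` of lengths
`l n = n + 1`. -/
structure InfStrongTFTree where
  T : Set (List Bool)
  c : ℕ → List Bool
  tree : IsTree T
  c_mem : ∀ n : ℕ, c n ∈ T
  c_len : ∀ n : ℕ, (c n).length = n + 1
  /-- `T` has no maximal nodes -/
  no_max : ∀ t ∈ T, ∃ u ∈ T, t <+: u ∧ t ≠ u
  /-- the stem of `T` is the empty sequence -/
  root : ([] : List Bool) ∈ T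
  /-- `c 0 = ⟨1⟩` -/
  c_zero : c 0 = [true]
  /-- `c n (l (n-1)) = 1` for `n > 0` -/
  c_prev : ∀ n : ℕ, 0 < n → pn (c n) n = true
  /-- the all-zeros sequence of length `l n` is in `T` -/
  zeros : ∀ n : ℕ, List.replicate (n + 1) false ∈ T
  /-- above the stem, splitting occurs only at levels of coding nodes -/
  split_levels : ∀ t ∈ T, t ≠ [] → (t ++ [false]) ∈ T → (t ++ [true]) ∈ T →
    ∃ n : ℕ, t.length = n + 1
  /-- the Splitting Criterion: a node at the level of `c n` splits iff it has no
  parallel 1's with `c n` -/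
  split_crit : ∀ n : ℕ, ∀ t ∈ T, t.length = n + 1 →
    (((t ++ [false]) ∈ T ∧ (t ++ [true]) ∈ T) ↔ ¬ ParallelOnes t (c n))

namespace TFTaux




/-- decode a natural number to a finite set -/
def dec (x : ℕ) : Finset ℕ := x.bitIndices.toFinset

lemma dec_surj (s : Finset ℕ) : ∃ x, dec x = s :=
  ⟨∑ i ∈ s, 2 ^ i, Finset.toFinset_bitIndices_twoPowSum s⟩

/-- one step of the construction of down-neighbor sets -/
def step (n : ℕ) (prev : List (Finset ℕ)) : Finset ℕ :=
  match n with
  | 0 => ∅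
  | m+1 =>
    insert m <|
      if (m+1 = 3*((m+1)/3-1)+3
          ∧ (∀ a ∈ dec (Nat.unpair ((m+1)/3-1)).1, a < (Nat.unpair ((m+1)/3-1)).2)
          ∧ (∀ a ∈ dec (Nat.unpair ((m+1)/3-1)).1, ∀ b ∈ dec (Nat.unpair ((m+1)/3-1)).1,
              a ∉ prev.getD b ∅))
      then dec (Nat.unpair ((m+1)/3-1)).1 else ∅

def AA : ℕ → List (Finset ℕ)
  | 0 => []
  | n+1 => AA n ++ [step n (AA n)]

/-- the set of down-neighbors of vertex `n` -/
def A (n : ℕ) : Finset ℕ := (AA (n+1)).getD n ∅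

lemma AA_length (n : ℕ) : (AA n).length = n := by
  induction n with
  | zero => rfl
  | succ n ih => simp [AA, ih]

lemma AA_getD (n k : ℕ) (h : k < n) : (AA n).getD k ∅ = A k := by
  induction n with
  | zero => omega
  | succ n ih =>
    rcases Nat.lt_succ_iff_lt_or_eq.mp h with h | rfl
    · show ((AA n ++ [step n (AA n)]).getD k ∅) = A k
      rw [List.getD_append _ _ _ _ (by rw [AA_length]; exact h)]
      exact ih h
    · rfl

lemma A_eq (n : ℕ) : A n = step n (AA n) := by
  show (AA n ++ [step n (AA n)]).getD n ∅ = _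
  rw [List.getD_append_right _ _ _ _ (by rw [AA_length])]
  simp [AA_length]

lemma mem_A_succ_cases {j m : ℕ} (h : j ∈ A (m+1)) :
    j = m ∨ (m+1 = 3*((m+1)/3-1)+3
      ∧ (∀ a ∈ dec (Nat.unpair ((m+1)/3-1)).1, a < (Nat.unpair ((m+1)/3-1)).2)
      ∧ (∀ a ∈ dec (Nat.unpair ((m+1)/3-1)).1, ∀ b ∈ dec (Nat.unpair ((m+1)/3-1)).1,
          a ∉ A b)
      ∧ j ∈ dec (Nat.unpair ((m+1)/3-1)).1) := by
  rw [A_eq] at h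
  simp only [step] at h
  rcases Finset.mem_insert.mp h with rfl | h
  · exact Or.inl rfl
  · right
    split_ifs at h with hc
    · obtain ⟨h1, h2, h3⟩ := hc
      refine ⟨h1, h2, ?_, h⟩
      intro a ha b hb hab
      have hiq : (Nat.unpair ((m+1)/3-1)).2 ≤ (m+1)/3-1 := Nat.unpair_right_le _
      have hb2 : b < m+1 := by have := h2 b hb; omega
      exact h3 a ha b hb (by rw [AA_getD _ _ hb2]; exact hab)
    · simp at h

lemma mem_A_self (m : ℕ) : m ∈ A (m+1) := by
  rw [A_eq]; simp only [step]; exact Finset.mem_insert_self _ _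

lemma A_succ_eq (m q : ℕ) (hm : m+1 = 3*q+3)
    (hbd : ∀ a ∈ dec (Nat.unpair q).1, a < (Nat.unpair q).2)
    (hind : ∀ a ∈ dec (Nat.unpair q).1, ∀ b ∈ dec (Nat.unpair q).1, a ∉ A b) :
    A (m+1) = insert m (dec (Nat.unpair q).1) := by
  have hq : (m+1)/3 - 1 = q := by omega
  rw [A_eq]
  simp only [step, hq]
  rw [if_pos]
  refine ⟨hm, hbd, ?_⟩
  intro a ha b hb hab
  have hiq : (Nat.unpair q).2 ≤ q := Nat.unpair_right_le _
  have hb2 : b < m+1 := by have := hbd b hb; omega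
  rw [AA_getD _ _ hb2] at hab
  exact hind a ha b hb hab

lemma A_lt {j n : ℕ} (h : j ∈ A n) : j < n := by
  cases n with
  | zero => rw [A_eq] at h; simp [step] at h
  | succ m =>
    rcases mem_A_succ_cases h with rfl | ⟨h1, h2, -, h4⟩
    · omega
    · have h5 := h2 j h4
      have h6 : (Nat.unpair ((m+1)/3-1)).2 ≤ (m+1)/3-1 := Nat.unpair_right_le _
      omega

lemma A_handler (s : Finset ℕ) (i : ℕ) (hbd : ∀ m ∈ s, m < i)
    (hind : ∀ j ∈ s, ∀ k ∈ s, j ∉ A k) :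
    ∃ n, i < n ∧ A (n+1) = insert n s := by
  obtain ⟨x, rfl⟩ := dec_surj s
  refine ⟨3*(Nat.pair x i)+2, ?_, ?_⟩
  · have := Nat.right_le_pair x i; omega
  · have := A_succ_eq (3*(Nat.pair x i)+2) (Nat.pair x i) (by omega)
      (by rw [Nat.unpair_pair]; exact hbd) (by rw [Nat.unpair_pair]; exact hind)
    rwa [Nat.unpair_pair] at this

/-- the graph coded is triangle-free -/
lemma A_tf {j k n : ℕ} (h1 : j ∈ A k) (h2 : k ∈ A n) (h3 : j ∈ A n) : False := by
  have hjk := A_lt h1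
  have hkn := A_lt h2
  cases n with
  | zero => omega
  | succ m =>
    rcases mem_A_succ_cases h2 with hkm | ⟨e1, e2, e3, e4⟩
    · rcases mem_A_succ_cases h3 with hjm | ⟨f1, f2, f3, f4⟩
      · omega
      · have hiq : (Nat.unpair ((m+1)/3-1)).2 ≤ (m+1)/3-1 := Nat.unpair_right_le _
        have hji := f2 j f4
        obtain ⟨m', hm'⟩ : ∃ m', k = m'+1 := ⟨k-1, by omega⟩
        rw [hm'] at h1
        rcases mem_A_succ_cases h1 with hjm' | ⟨g1, -, -, -⟩
        · omega
        · omega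
    · have hki := e2 k e4
      have hiq : (Nat.unpair ((m+1)/3-1)).2 ≤ (m+1)/3-1 := Nat.unpair_right_le _
      rcases mem_A_succ_cases h3 with hjm | ⟨-, -, -, f4⟩
      · omega
      · exact e3 j f4 k e4 h1



/-- the coding nodes -/
noncomputable def cNode (n : ℕ) : List Bool := (List.range (n+1)).map fun k => decide (k ∈ A (n+1))

@[simp] lemma cNode_length (n : ℕ) : (cNode n).length = n+1 := by simp [cNode]

lemma pn_cNode (n l : ℕ) : pn (cNode n) l = decide (l ∈ A (n+1)) := by
  unfold pn
  rcases lt_or_ge l (n+1) with h | h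
  · rw [List.getD_eq_getElem _ _ (by simpa using h)]
    simp [cNode]
  · rw [List.getD_eq_default _ _ (by simpa using h)]
    symm
    simp only [decide_eq_false_iff_not]
    intro hmem
    exact absurd (A_lt hmem) (by omega)

/-- the tree -/
def Tset : Set (List Bool) :=
  {t | ∀ k, k < t.length → pn t k = true → ∀ l, l < k → pn t l = true → l ∉ A k}

lemma pn_prefix {u t : List Bool} (h : u <+: t) {l : ℕ} (hl : l < u.length) :
    pn u l = pn t l := by
  obtain ⟨r, rfl⟩ := h
  unfold pn
  rw [List.getD_append _ _ _ _ hl]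

lemma pn_concat (t : List Bool) (b : Bool) : pn (t ++ [b]) t.length = b := by
  unfold pn
  rw [List.getD_append_right _ _ _ _ (le_refl _)]
  simp

lemma prefix_mem {u t : List Bool} (h : u <+: t) (ht : t ∈ Tset) : u ∈ Tset := by
  intro k hk hpk l hl hpl
  exact ht k (lt_of_lt_of_le hk h.length_le) ((pn_prefix h hk).symm.trans hpk)
    l hl ((pn_prefix h (lt_trans hl hk)).symm.trans hpl)

lemma concat_mem {t : List Bool} (b : Bool) (ht : t ∈ Tset)
    (hb : b = true → ∀ l, l < t.length → pn t l = true → l ∉ A t.length) :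
    t ++ [b] ∈ Tset := by
  intro k hk hpk l hl hpl
  rw [List.length_append, List.length_singleton] at hk
  by_cases hkt : k < t.length
  · exact ht k hkt ((pn_prefix (List.prefix_append t [b]) hkt).trans hpk)
      l hl ((pn_prefix (List.prefix_append t [b]) (lt_trans hl hkt)).trans hpl)
  · have hkeq : k = t.length := by omega
    subst hkeq
    have hb' : b = true := (pn_concat t b).symm.trans hpk
    exact hb hb' l (by omega)
      ((pn_prefix (List.prefix_append t [b]) (by omega)).trans hpl)

lemma concat_true_mem_iff {t : List Bool} (ht : t ∈ Tset) :
    t ++ [true] ∈ Tset ↔ ∀ l, l < t.length → pn t l = true → l ∉ A t.length := by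
  constructor
  · intro h l hl hpl
    exact h t.length (by simp) (pn_concat t true) l hl
      ((pn_prefix (List.prefix_append t [true]) hl).symm.trans hpl)
  · intro h
    exact concat_mem true ht (fun _ => h)

lemma cNode_mem (n : ℕ) : cNode n ∈ Tset := by
  intro k hk hpk l hl hpl hlk
  rw [pn_cNode] at hpk hpl
  exact A_tf hlk (by simpa using hpk) (by simpa using hpl)

lemma PO_iff (t : List Bool) (n : ℕ) (h : t.length = n+1) :
    ParallelOnes t (cNode n) ↔ ∃ l, l < n+1 ∧ pn t l = true ∧ l ∈ A (n+1) := by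
  constructor
  · rintro ⟨l, hl1, hl2, hp, hc⟩
    rw [pn_cNode] at hc
    exact ⟨l, by omega, hp, by simpa using hc⟩
  · rintro ⟨l, hl, hp, hm⟩
    exact ⟨l, by omega, by simp [cNode_length]; omega, hp, by rw [pn_cNode]; simpa⟩

lemma meet_prefix : ∀ a b : List Bool, meet a b <+: a
  | [], _ => by simp [meet]
  | a :: as, [] => by simp [meet]
  | a :: as, b :: bs => by
    show (if a = b then a :: meet as bs else []) <+: a :: as
    split_ifs
    · exact List.cons_prefix_cons.mpr ⟨rfl, meet_prefix as bs⟩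
    · exact List.nil_prefix

lemma pn_replicate (m k : ℕ) : pn (List.replicate m false) k = false := by
  unfold pn
  rcases lt_or_ge k m with h | h
  · rw [List.getD_eq_getElem _ _ (by simpa using h)]; simp
  · rw [List.getD_eq_default _ _ (by simpa using h)]

noncomputable def S : InfStrongTFTree where
  T := Tset
  c := cNode
  tree := ⟨fun s hs t _ => prefix_mem (meet_prefix s t) hs,
    fun s _ t ht _ => prefix_mem (List.take_prefix s.length t) ht⟩
  c_mem := cNode_mem
  c_len := cNode_length
  no_max := fun t ht => ⟨t ++ [false], concat_mem false ht (by simp),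
    List.prefix_append t [false], by intro h; simpa using congrArg List.length h⟩
  root := fun k hk => by simp at hk
  c_zero := by
    have h0 : (0:ℕ) ∈ A 1 := mem_A_self 0
    simp [cNode, List.range_succ, h0]
  c_prev := fun n _ => by rw [pn_cNode]; simpa using mem_A_self n
  zeros := fun n k hk hpk => by rw [pn_replicate] at hpk; cases hpk
  split_levels := fun t _ hne _ _ =>
    ⟨t.length - 1, by have := List.length_pos_iff.mpr hne; omega⟩
  split_crit := fun n t ht hlen => by
    constructor
    · rintro ⟨-, h2⟩ hPO
      obtain ⟨l, hl, hp, hm⟩ := (PO_iff t n hlen).mp hPO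
      exact (concat_true_mem_iff ht).mp h2 l (by omega) hp (by rw [hlen]; exact hm)
    · intro hPO
      refine ⟨concat_mem false ht (by simp), (concat_true_mem_iff ht).mpr ?_⟩
      intro l hl hp hm
      exact hPO ((PO_iff t n hlen).mpr ⟨l, by omega, hp, by rw [hlen] at hm; exact hm⟩)

lemma density {t : List Bool} (ht : t ∈ Tset) : ∃ n, t <+: cNode n := by
  classical
  set s : Finset ℕ := (Finset.range t.length).filter (fun k => pn t k = true) with hs
  have hbd : ∀ m ∈ s, m < t.length := by
    intro m hm
    rw [hs, Finset.mem_filter, Finset.mem_range] at hm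
    exact hm.1
  have hind : ∀ j ∈ s, ∀ k ∈ s, j ∉ A k := by
    intro j hj k hk hmem
    rw [hs, Finset.mem_filter, Finset.mem_range] at hj hk
    exact ht k hk.1 hk.2 j (A_lt hmem) hj.2 hmem
  obtain ⟨n, hn, hA⟩ := A_handler s t.length hbd hind
  refine ⟨n, ?_⟩
  have heq : t = (cNode n).take t.length := by
    apply List.ext_getElem (by simp [cNode_length]; omega)
    intro k h1 h2
    rw [List.getElem_take]
    have hck : k < (cNode n).length := by rw [cNode_length]; omega
    have hc : (cNode n)[k] = decide (k ∈ A (n+1)) := by simp [cNode]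
    rw [hc, hA]
    have hks : k ∈ s ↔ t[k] = true := by
      rw [hs, Finset.mem_filter, Finset.mem_range]
      unfold pn
      rw [List.getD_eq_getElem _ _ h1]
      simp [h1]
    have hkn : k ≠ n := by omega
    have hiff : k ∈ insert n s ↔ t[k] = true := by
      rw [Finset.mem_insert]
      constructor
      · rintro (h | h)
        · exact absurd h hkn
        · exact hks.mp h
      · intro h
        exact Or.inr (hks.mpr h)
    by_cases hmem : k ∈ insert n s
    · have hd : decide (k ∈ insert n s) = true := by simpa using hmem
      rw [hd]
      exact hiff.mp hmem
    · have hd : decide (k ∈ insert n s) = false := by simpa using hmem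
      rw [hd]
      cases hb : t[k] with
      | false => rfl
      | true => exact absurd (hiff.mpr hb) hmem
  rw [heq]
  exact List.take_prefix _ _

lemma tfc {t : List Bool} (ht : t ∈ Tset) (n : ℕ) (hlt : (cNode n).length < t.length)
    (h : ∃ i < n, pn t (i+1) = true ∧ pn (cNode n) (i+1) = true) : pn t (n+1) = false := by
  obtain ⟨i, hin, hpt, hpc⟩ := h
  rw [cNode_length] at hlt
  cases hv : pn t (n+1) with
  | false => rfl
  | true =>
    rw [pn_cNode] at hpc
    exact absurd (by simpa using hpc) (ht (n+1) hlt hv (i+1) (by omega) hpt)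

lemma req (F : ℕ → Finset ℕ) (hmax : ∀ i : ℕ, ∀ m ∈ F i, m < i) (i : ℕ)
    (hindep : ∀ j ∈ F i, ∀ k ∈ F i, j < k → pn (cNode k) (j + 1) = false) :
    ∃ n : ℕ, i ≤ n ∧ ∀ m < i, (pn (cNode n) (m + 1) = true ↔ m ∈ F i) := by
  classical
  set s : Finset ℕ := (F i).image (· + 1) with hs
  have hbd : ∀ a ∈ s, a < i + 1 := by
    intro a ha
    rw [hs, Finset.mem_image] at ha
    obtain ⟨m, hm, rfl⟩ := ha
    have := hmax i m hm; omega
  have hind : ∀ a ∈ s, ∀ b ∈ s, a ∉ A b := by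
    intro a ha b hb hmem
    rw [hs, Finset.mem_image] at ha hb
    obtain ⟨m1, hm1, rfl⟩ := ha
    obtain ⟨m2, hm2, rfl⟩ := hb
    have hlt : m1 + 1 < m2 + 1 := A_lt hmem
    have h2 := hindep m1 hm1 m2 hm2 (by omega)
    rw [pn_cNode] at h2
    simp only [decide_eq_false_iff_not] at h2
    exact h2 hmem
  obtain ⟨n, hn, hA⟩ := A_handler s (i+1) hbd hind
  refine ⟨n, by omega, ?_⟩
  intro m hm
  rw [pn_cNode, hA]
  simp only [Finset.mem_insert, decide_eq_true_iff]
  constructor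
  · rintro (h | h)
    · omega
    · rw [hs, Finset.mem_image] at h
      obtain ⟨m2, hm2, he⟩ := h
      have : m2 = m := by omega
      rwa [this] at hm2
  · intro hmF
    exact Or.inr (by rw [hs, Finset.mem_image]; exact ⟨m, hmF, rfl⟩)


end TFTaux

/-- There is an infinite strong triangle-free tree `S`, with coding nodes
dense in `S`, satisfying property (A₃)^tree: `S` satisfies the Triangle-Free Criterion,
and for any enumeration `(F i)` of finite subsets of `ω` with `max (F i) < i` in which
each finite set appears cofinally often, each requirement `F i` is met by some coding
node `c n` with `n ≥ i`.  Hence the coding nodes of `S` densely code `H₃`. -/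
theorem exists_strong_tft_densely_coding_H3 :
    ∃ S : InfStrongTFTree,
      (∀ t ∈ S.T, ∃ n : ℕ, t <+: S.c n) ∧
      (∀ t ∈ S.T, ∀ n : ℕ, (S.c n).length < t.length →
        (∃ i < n, pn t (i + 1) = true ∧ pn (S.c n) (i + 1) = true) →
        pn t (n + 1) = false) ∧
      (∀ F : ℕ → Finset ℕ,
        (∀ i : ℕ, ∀ m ∈ F i, m < i) →
        (∀ s : Finset ℕ, ∀ i : ℕ, ∃ j : ℕ, i ≤ j ∧ F j = s) →
        ∀ i : ℕ, (∀ j ∈ F i, ∀ k ∈ F i, j < k → pn (S.c k) (j + 1) = false) →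
          ∃ n : ℕ, i ≤ n ∧ ∀ m < i, (pn (S.c n) (m + 1) = true ↔ m ∈ F i)) := by
  refine ⟨TFTaux.S, ?_, ?_, ?_⟩
  · exact fun t ht => TFTaux.density ht
  · exact fun t ht n hlt h => TFTaux.tfc ht n hlt h
  · exact fun F hmax _ i hindep => TFTaux.req F hmax i hindep
end

section
/- Let A be a finite strong coding tree with coding nodes (c_n)_{n<N}, and let A⁺ be the set of immediate extensions in the ambient tree of the maximal nodes of A. Then for every F ⊆ N such that {c_n : n ∈ F} codes no edges, there exists t ∈ A⁺ such that for all n < N, t(l_n) = 1 if and only if n ∈ F. -/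
/-- `hat S` is the set of all initial segments of members of `S`. -/
def hat (S : Set (List Bool)) : Set (List Bool) := {u | ∃ t ∈ S, u <+: t}

/-- `s` is a splitting node of `S`: both immediate extensions of `s` lie in `hat S`. -/
def SplitsIn (S : Set (List Bool)) (s : List Bool) : Prop :=
  (s ++ [false]) ∈ hat S ∧ (s ++ [true]) ∈ hat S

/-- `s` is a critical node of a tree with coding nodes: a splitting node or a
coding node. -/
def IsCritical (S : Set (List Bool)) (c : ℕ → List Bool) (s : List Bool) : Prop :=
  SplitsIn S s ∨ ∃ n : ℕ, s = c n

/-- Two nodes have parallel 1's at some common level. -/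
def Par1 (s t : List Bool) : Prop :=
  ∃ l : ℕ, l < s.length ∧ l < t.length ∧ pn s l = true ∧ pn t l = true

/-- A strong coding tree: a strongly skew tree with coding nodes `c n` dense in it,
closed under the relevant all-zeros nodes, satisfying the Parallel 1's Criterion and
the Splitting Criterion for Skew Trees, together with the interval structure (6),(7)
of Definition 4.9 of the paper. -/
structure StrongCodingTree where
  nodes : Set (List Bool)
  c : ℕ → List Bool
  tree : IsTree nodes
  c_mem : ∀ n : ℕ, c n ∈ nodes
  c_len_mono : StrictMono fun n => (c n).length
  /-- for each node `t`, the all-zeros node of the same length is in the tree -/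
  zeros : ∀ t ∈ nodes, List.replicate t.length false ∈ nodes
  /-- the stem -/
  stem : List Bool
  stem_mem : stem ∈ nodes
  stem_le : ∀ t ∈ nodes, t <+: stem ∨ stem <+: t
  /-- skew: each level has at most one critical node -/
  skew : ∀ s ∈ nodes, ∀ t ∈ nodes, IsCritical nodes c s → IsCritical nodes c t →
    s.length = t.length → s = t
  /-- strongly skew: any node passing by, but not extending, a splitting node has
  passing number `0` there -/
  stronglySkew : ∀ s : List Bool, SplitsIn nodes s → ∀ t ∈ nodes,
    s.length < t.length → ¬ s <+: t → pn t s.length = false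
  /-- the coding nodes are dense in the tree -/
  dense : ∀ t ∈ nodes, ∃ n : ℕ, t <+: c n
  /-- `c 0` extends `stem⌢1` and does not split -/
  c0_stem : (stem ++ [true]) <+: c 0
  c_nosplit : ∀ n : ℕ, ¬ SplitsIn nodes (c n)
  /-- `c (n+1)` has passing number `1` at `c n` -/
  c_pn : ∀ n : ℕ, pn (c (n + 1)) ((c n).length) = true
  /-- Parallel 1's Criterion, part (1): any new parallel 1's among nodes of the tree
  are witnessed by a coding node below their lengths -/
  poc_witness : ∀ s ∈ nodes, ∀ t ∈ nodes, ∀ l : ℕ, l < s.length → l < t.length →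
    s.take (l + 1) ≠ t.take (l + 1) → pn s l = true → pn t l = true →
    ∃ n : ℕ, (c n).length < s.length ∧ (c n).length < t.length ∧
      pn s ((c n).length) = true ∧ pn t ((c n).length) = true
  /-- Parallel 1's Criterion, part (2): letting `l'` be least with parallel 1's and
  `n` least such that `c n` witnesses them, the tree has no critical nodes of length
  strictly between `l'` and `(c n).length` -/
  poc_min : ∀ s ∈ nodes, ∀ t ∈ nodes,
    s.take ((s.length ⊓ t.length)) ≠ t.take ((s.length ⊓ t.length)) →
    ∀ l' : ℕ, IsLeast {l | l < s.length ∧ l < t.length ∧ pn s l = true ∧ pn t l = true} l' →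
    ∀ n : ℕ, IsLeast {n | (c n).length < s.length ∧ (c n).length < t.length ∧
        pn s ((c n).length) = true ∧ pn t ((c n).length) = true} n →
    ∀ u ∈ nodes, IsCritical nodes c u → ¬ (l' < u.length ∧ u.length < (c n).length)
  /-- Splitting Criterion for Skew Trees (intervals `n ≥ 1`) -/
  splitCrit : ∀ n : ℕ, ∀ s ∈ hat nodes, s.length = (c n).length + 1 →
    ((∃ d : List Bool, SplitsIn nodes d ∧ s <+: d ∧ d.length < (c (n + 1)).length) ↔
      ¬ Par1 s ((c (n + 1)).take ((c n).length + 1)))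
  /-- Splitting Criterion for Skew Trees (the `0`-th interval) -/
  splitCrit0 : ∀ s ∈ hat nodes, s.length = stem.length + 1 →
    ((∃ d : List Bool, SplitsIn nodes d ∧ s <+: d ∧ d.length < (c 0).length) ↔
      s = stem ++ [false])
  /-- condition (6): each side of a splitting node in an interval has exactly one
  extension to the next coding level, with the matching passing number -/
  ext6 : ∀ n : ℕ, ∀ d : List Bool, SplitsIn nodes d → (c n).length < d.length →
    d.length < (c (n + 1)).length → ∀ b : Bool,
      (∃! u : List Bool, u ∈ nodes ∧ (d ++ [b]) <+: u ∧ u.length = (c (n + 1)).length) ∧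
      (∀ u ∈ nodes, (d ++ [b]) <+: u → u.length = (c (n + 1)).length →
        (u ++ [b]) ∈ hat nodes ∧ (u ++ [!b]) ∉ hat nodes)
  /-- condition (7): a node of length `l n + 1` not extending to a splitting node in
  the interval has exactly one extension to the next coding level, whose immediate
  extension is `0` -/
  ext7 : ∀ n : ℕ, ∀ s ∈ hat nodes, s.length = (c n).length + 1 →
    (¬ ∃ d : List Bool, SplitsIn nodes d ∧ s <+: d ∧ d.length < (c (n + 1)).length) →
    (∃! u : List Bool, u ∈ nodes ∧ s <+: u ∧ u.length = (c (n + 1)).length) ∧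
    (∀ u ∈ nodes, s <+: u → u.length = (c (n + 1)).length →
      (u ++ [false]) ∈ hat nodes ∧ (u ++ [true]) ∉ hat nodes)



/-! ### Auxiliary list lemmas -/

private lemma pn_eq_of_prefix {s t : List Bool} (h : s <+: t) {l : ℕ}
    (hl : l < s.length) : pn t l = pn s l := by
  obtain ⟨r, rfl⟩ := h
  exact List.getD_append s r false l hl

private lemma pn_concat (u : List Bool) (b : Bool) : pn (u ++ [b]) u.length = b := by
  simp [pn, List.getD_append_right _ _ _ _ (le_refl u.length)]

private lemma pn_default {t : List Bool} {l : ℕ} (h : t.length ≤ l) : pn t l = false :=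
  List.getD_eq_default _ _ h

private lemma pn_replicate (n l : ℕ) : pn (List.replicate n false) l = false := by
  simp only [pn, List.getD_eq_getElem?_getD, List.getElem?_replicate]
  split <;> rfl

private lemma replicate_prefix {k m : ℕ} (h : k ≤ m) (b : Bool) :
    List.replicate k b <+: List.replicate m b :=
  ⟨List.replicate (m - k) b, by rw [← List.replicate_add]; congr 1; omega⟩

private lemma pn_take {t : List Bool} {k l : ℕ} (hl : l < k) :
    pn (t.take k) l = pn t l := by
  rcases lt_or_ge l t.length with h | h
  · exact (pn_eq_of_prefix (List.take_prefix k t)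
      (by simp [List.length_take]; omega)).symm
  · rw [pn_default h, pn_default (by simp [List.length_take]; omega)]

private lemma take_succ_pn {t : List Bool} {k : ℕ} (h : k < t.length) :
    t.take (k + 1) = t.take k ++ [pn t k] := by
  rw [List.take_succ, List.getElem?_eq_getElem h]
  have : pn t k = t[k] := by
    simp [pn, List.getD_eq_getElem?_getD, List.getElem?_eq_getElem h]
  rw [this]; rfl

private lemma take_eq_of_prefix {s t : List Bool} (h : s <+: t) :
    t.take s.length = s := by
  conv_rhs => rw [List.prefix_iff_eq_take.mp h]

private lemma prefix_take_of_prefix {s t : List Bool} (h : s <+: t) {k : ℕ}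
    (hk : s.length ≤ k) : s <+: t.take k := by
  rw [List.prefix_iff_eq_take, List.take_take, min_eq_left hk, take_eq_of_prefix h]

private lemma take_eq_take_of_take_eq {s t : List Bool} {k j : ℕ} (hj : j ≤ k)
    (h : s.take k = t.take k) : s.take j = t.take j := by
  have := congrArg (List.take j) h
  rwa [List.take_take, List.take_take, min_eq_left hj] at this

private lemma exists_first_diff {a b : List Bool} (hlen : a.length ≤ b.length)
    (hnp : ¬ a <+: b) : ∃ e, e < a.length ∧ a.take e = b.take e ∧ pn a e ≠ pn b e := by
  classical
  have hex : ∃ e, e < a.length ∧ pn a e ≠ pn b e := by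
    by_contra hc
    push_neg at hc
    apply hnp
    rw [List.prefix_iff_eq_take]
    apply List.ext_getElem (by simp [List.length_take]; omega)
    intro i h₁ h₂
    have hia : i < a.length := h₁
    have hib : i < b.length := by omega
    have := hc i hia
    have ha : pn a i = a[i] := by
      simp [pn, List.getD_eq_getElem?_getD, List.getElem?_eq_getElem hia]
    have hb : pn b i = b[i] := by
      simp [pn, List.getD_eq_getElem?_getD, List.getElem?_eq_getElem hib]
    have h3 : (b.take a.length)[i] = b[i] := by
      simp [List.getElem_take]
    rw [h3, ← ha, ← hb, this]
  set P : ℕ → Prop := fun e => e < a.length ∧ pn a e ≠ pn b e with hP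
  have hfind := Nat.find_spec hex
  set e := Nat.find hex with he
  refine ⟨e, hfind.1, ?_, hfind.2⟩
  apply List.ext_getElem (by simp [List.length_take]; omega)
  intro i h₁ h₂
  have hie : i < e := by simp [List.length_take] at h₁; omega
  have hia : i < a.length := by omega
  have hib : i < b.length := by omega
  have hnotP := Nat.find_min hex hie
  simp only [not_and, not_not] at hnotP
  have hpn : pn a i = pn b i := hnotP hia
  have ha : pn a i = a[i] := by
    simp [pn, List.getD_eq_getElem?_getD, List.getElem?_eq_getElem hia]
  have hb : pn b i = b[i] := by
    simp [pn, List.getD_eq_getElem?_getD, List.getElem?_eq_getElem hib]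
  simp only [List.getElem_take]
  rw [← ha, ← hb, hpn]



/-! ### Tree-level helper lemmas -/

private lemma mem_hat_of_mem {S : Set (List Bool)} {t : List Bool} (h : t ∈ S) :
    t ∈ hat S := ⟨t, h, List.prefix_rfl⟩

private lemma mem_hat_of_prefix {S : Set (List Bool)} {s t : List Bool}
    (hp : s <+: t) (h : t ∈ hat S) : s ∈ hat S := by
  obtain ⟨w, hw, hvw⟩ := h
  exact ⟨w, hw, hp.trans hvw⟩

namespace StrongCodingTree

variable (T : StrongCodingTree)

private lemma len_lt {a b : ℕ} (h : a < b) : (T.c a).length < (T.c b).length :=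
  T.c_len_mono h

private lemma lt_of_len_lt {a b : ℕ} (h : (T.c a).length < (T.c b).length) : a < b :=
  T.c_len_mono.lt_iff_lt.mp h

private lemma c_take_mem {k m : ℕ} (h : (T.c k).length ≤ (T.c m).length) :
    (T.c m).take (T.c k).length ∈ T.nodes :=
  T.tree.2 (T.c k) (T.c_mem k) (T.c m) (T.c_mem m) h

/-- "Freeze": if a node of length `l n + 1` has parallel 1's with the corresponding
initial segment of `c (n+1)`, then every node extending it to length `l (n+1)`
extends only by `0`. -/
private lemma freeze {n : ℕ} {s : List Bool} (hs : s ∈ hat T.nodes)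
    (hlen : s.length = (T.c n).length + 1)
    (hpar : Par1 s ((T.c (n + 1)).take ((T.c n).length + 1))) :
    ∀ u ∈ T.nodes, s <+: u → u.length = (T.c (n + 1)).length →
      (u ++ [false]) ∈ hat T.nodes ∧ (u ++ [true]) ∉ hat T.nodes := by
  have hns : ¬ ∃ d : List Bool, SplitsIn T.nodes d ∧ s <+: d ∧
      d.length < (T.c (n + 1)).length := by
    rw [T.splitCrit n s hs hlen]
    exact fun h => h hpar
  exact (T.ext7 n s hs hlen hns).2

/-- If `c m` (for `m` beyond `n+1`) has parallel 1's with `c (n+1)` below level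
`l n + 1`, then `c m` has passing number `0` at `l (n+1)`. -/
private lemma pn_next_false {n m : ℕ} (hm : (T.c (n + 1)).length < (T.c m).length)
    (hpar : Par1 ((T.c m).take ((T.c n).length + 1))
      ((T.c (n + 1)).take ((T.c n).length + 1))) :
    pn (T.c m) ((T.c (n + 1)).length) = false := by
  have hn1 : (T.c n).length < (T.c (n + 1)).length := T.len_lt (Nat.lt_succ_self n)
  have hlenm : (T.c n).length + 1 ≤ (T.c m).length := by omega
  have hs : (T.c m).take ((T.c n).length + 1) ∈ hat T.nodes :=
    mem_hat_of_prefix (List.take_prefix _ _) (mem_hat_of_mem (T.c_mem m))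
  have hslen : ((T.c m).take ((T.c n).length + 1)).length = (T.c n).length + 1 := by
    simp [List.length_take]; omega
  have hu : (T.c m).take ((T.c (n + 1)).length) ∈ T.nodes :=
    T.c_take_mem (le_of_lt hm)
  have hsu : (T.c m).take ((T.c n).length + 1) <+: (T.c m).take ((T.c (n + 1)).length) := by
    rw [List.prefix_iff_eq_take, List.take_take, hslen, min_eq_left (by omega)]
  have hulen : ((T.c m).take ((T.c (n + 1)).length)).length = (T.c (n + 1)).length := by
    simp [List.length_take]; omega
  have hfr := T.freeze hs hslen hpar _ hu hsu hulen
  by_contra hcon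
  have hbit : pn (T.c m) ((T.c (n + 1)).length) = true := by
    revert hcon; cases pn (T.c m) ((T.c (n + 1)).length) <;> simp
  have htk : (T.c m).take ((T.c (n + 1)).length + 1)
      = (T.c m).take ((T.c (n + 1)).length) ++ [true] := by
    rw [take_succ_pn hm, hbit]
  have : (T.c m).take ((T.c (n + 1)).length) ++ [true] ∈ hat T.nodes := by
    rw [← htk]
    exact mem_hat_of_prefix (List.take_prefix _ _) (mem_hat_of_mem (T.c_mem m))
  exact hfr.2 this

/-- Consecutive coding nodes have no parallel 1's below the previous coding level. -/
private lemma no_par_consec (n : ℕ) :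
    ¬ Par1 ((T.c (n + 2)).take ((T.c n).length + 1))
      ((T.c (n + 1)).take ((T.c n).length + 1)) := by
  intro hpar
  have hm : (T.c (n + 1)).length < (T.c (n + 2)).length := T.len_lt (by omega)
  have := T.pn_next_false hm hpar
  rw [T.c_pn (n + 1)] at this
  simp at this

/-- No divergence inside an interval: a node of full interval length extending a
common prefix with a splitting node of the interval must pass through it. -/
private lemma no_diverge {n : ℕ} {d w t0 : List Bool} (hd : SplitsIn T.nodes d)
    (h1 : (T.c n).length < d.length) (h2 : d.length < (T.c (n + 1)).length)
    (hw : w ∈ T.nodes) (hwlen : w.length = (T.c (n + 1)).length)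
    (ht0d : t0 <+: d) (ht0w : t0 <+: w) (ht0len : (T.c n).length < t0.length) :
    d <+: w := by
  by_contra hnp
  have hdw : d.length ≤ w.length := by omega
  obtain ⟨e, he, hteq, hpne⟩ := exists_first_diff hdw hnp
  have het0 : t0.length ≤ e := by
    by_contra hlt
    push_neg at hlt
    have h3 : pn d e = pn t0 e := pn_eq_of_prefix ht0d hlt
    have h4 : pn w e = pn t0 e := pn_eq_of_prefix ht0w hlt
    exact hpne (h3.trans h4.symm)
  -- the meet point is a splitting node
  have hdhat : d ∈ hat T.nodes := by
    obtain ⟨x, hx, hpre⟩ := hd.1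
    exact ⟨x, hx, (List.prefix_append d [false]).trans hpre⟩
  have hm1 : d.take e ++ [pn d e] ∈ hat T.nodes := by
    rw [← take_succ_pn he]
    exact mem_hat_of_prefix (List.take_prefix _ _) hdhat
  have hm2 : d.take e ++ [pn w e] ∈ hat T.nodes := by
    have hew : e < w.length := by omega
    rw [hteq, ← take_succ_pn hew]
    exact mem_hat_of_prefix (List.take_prefix _ _) (mem_hat_of_mem hw)
  have hcases : (pn d e = false ∧ pn w e = true) ∨ (pn d e = true ∧ pn w e = false) := by
    rcases Bool.eq_false_or_eq_true (pn d e) with h | h <;>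
      rcases Bool.eq_false_or_eq_true (pn w e) with h' | h' <;> simp_all
  have hsplit : SplitsIn T.nodes (d.take e) := by
    rcases hcases with ⟨h, h'⟩ | ⟨h, h'⟩
    · exact ⟨by rwa [h] at hm1, by rwa [h'] at hm2⟩
    · exact ⟨by rwa [h'] at hm2, by rwa [h] at hm1⟩
  have helen : (d.take e).length = e := by simp [List.length_take]; omega
  -- two distinct extensions of `d` to level l (n+1)
  obtain ⟨⟨u₁, ⟨hu₁, hdu₁, hu₁len⟩, _⟩, _⟩ := T.ext6 n d hd h1 h2 true
  obtain ⟨⟨u₀, ⟨hu₀, hdu₀, hu₀len⟩, _⟩, _⟩ := T.ext6 n d hd h1 h2 false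
  have hne : u₁ ≠ u₀ := by
    intro hcon
    have e1 : pn u₁ d.length = true := by
      rw [pn_eq_of_prefix hdu₁ (by simp), pn_concat]
    have e0 : pn u₀ d.length = false := by
      rw [pn_eq_of_prefix hdu₀ (by simp), pn_concat]
    rw [hcon, e0] at e1
    exact Bool.false_ne_true e1
  have hee : (T.c n).length < (d.take e).length := by omega
  have hee2 : (d.take e).length < (T.c (n + 1)).length := by omega
  obtain ⟨⟨u', hu'p, huniq⟩, _⟩ := T.ext6 n (d.take e) hsplit hee hee2 (pn d e)
  have hpre1 : d.take e ++ [pn d e] <+: d := by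
    rw [← take_succ_pn he]; exact List.take_prefix _ _
  have h1' : u₁ = u' := huniq u₁ ⟨hu₁, hpre1.trans ((List.prefix_append d [true]).trans hdu₁), hu₁len⟩
  have h0' : u₀ = u' := huniq u₀ ⟨hu₀, hpre1.trans ((List.prefix_append d [false]).trans hdu₀), hu₀len⟩
  exact hne (h1'.trans h0'.symm)


/-- The key base-case lemma: `c 1` and `c p` (both coding vertices joined to
vertex `0` being excluded) cannot share a parallel 1 along a common initial
segment below the level of `c 0`. -/
private lemma base_big {p l : ℕ} (hp : 2 < p)
    (h0p : pn (T.c p) ((T.c 0).length) = false)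
    (hl : l < (T.c 0).length)
    (h1 : pn (T.c 1) l = true) (hpl : pn (T.c p) l = true)
    (heq : (T.c 1).take (l + 1) = (T.c p).take (l + 1)) : False := by
  classical
  have h01 : (T.c 0).length < (T.c 1).length := T.len_lt one_pos
  have h12 : (T.c 1).length < (T.c 2).length := T.len_lt one_lt_two
  have h2p : (T.c 2).length < (T.c p).length := T.len_lt hp
  have h1p : (T.c 1).length < (T.c p).length := by omega
  -- no shared 1's between c 2 and c 1 below level l 0
  have b1 : ∀ l' ≤ (T.c 0).length,
      ¬ (pn (T.c 2) l' = true ∧ pn (T.c 1) l' = true) := by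
    intro l' hl' ⟨h2', h1'⟩
    apply T.no_par_consec 0
    refine ⟨l', ?_, ?_, ?_, ?_⟩
    · simp [List.length_take]; omega
    · simp [List.length_take]; omega
    · rwa [pn_take (by omega)]
    · rwa [pn_take (by omega)]
  -- c p is frozen through the interval (l 0, l 1)
  have a1 : pn (T.c p) ((T.c 1).length) = false := by
    apply T.pn_next_false h1p
    exact ⟨l, by simp [List.length_take]; omega, by simp [List.length_take]; omega,
      by rwa [pn_take (by omega)], by rwa [pn_take (by omega)]⟩
  -- c 2 has passing number 0 at level l 0
  have h20 : pn (T.c 2) ((T.c 0).length) = false := by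
    by_contra hcon
    have : pn (T.c 2) ((T.c 0).length) = true := by
      revert hcon; cases pn (T.c 2) ((T.c 0).length) <;> simp
    exact b1 _ le_rfl ⟨this, T.c_pn 0⟩
  -- no shared 1's between c 2 and c 1 below level l 1
  have ns21 : ∀ l' ≤ (T.c 1).length,
      ¬ (pn (T.c 2) l' = true ∧ pn (T.c 1) l' = true) := by
    intro l' hl' ⟨h2', h1'⟩
    rcases eq_or_lt_of_le hl' with rfl | hlt
    · rw [pn_default le_rfl] at h1'; simp at h1'
    rcases le_or_gt l' ((T.c 0).length) with hle | hgt
    · exact b1 l' hle ⟨h2', h1'⟩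
    by_cases heq2 : (T.c 2).take (l' + 1) = (T.c 1).take (l' + 1)
    · have e1 : pn (T.c 2) ((T.c 0).length) = pn (T.c 1) ((T.c 0).length) := by
        rw [← pn_take (show (T.c 0).length < l' + 1 by omega) (t := T.c 2), heq2,
          pn_take (by omega)]
      rw [T.c_pn 0] at e1
      rw [e1] at h20; simp at h20
    · obtain ⟨m, hmA, hmB, hw2, hw1⟩ := T.poc_witness (T.c 2) (T.c_mem 2)
        (T.c 1) (T.c_mem 1) l' (by omega) (by omega) heq2 h2' h1'
      have hm0 : m = 0 := by
        have := T.lt_of_len_lt (show (T.c m).length < (T.c 1).length from hmB)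
        omega
      subst hm0
      rw [hw2] at h20; simp at h20
  -- no shared 1's between c 2 and c p below level l 1
  have ns2p : ∀ l' ≤ (T.c 1).length,
      ¬ (pn (T.c 2) l' = true ∧ pn (T.c p) l' = true) := by
    intro l' hl' ⟨h2', hp'⟩
    rcases eq_or_lt_of_le hl' with rfl | hlt
    · rw [a1] at hp'; simp at hp'
    by_cases heq2 : (T.c 2).take (l' + 1) = (T.c p).take (l' + 1)
    · by_cases hll : l ≤ l'
      · have e1 : pn (T.c 2) l = pn (T.c p) l := by
          rw [← pn_take (show l < l' + 1 by omega) (t := T.c 2), heq2,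
            pn_take (by omega)]
        exact b1 l (le_of_lt hl) ⟨by rw [e1, hpl], h1⟩
      · push_neg at hll
        have e2 : (T.c 1).take (l' + 1) = (T.c p).take (l' + 1) :=
          take_eq_take_of_take_eq (by omega) heq
        have e4 : pn (T.c 1) l' = pn (T.c p) l' := by
          rw [← pn_take (show l' < l' + 1 by omega) (t := T.c 1), e2,
            pn_take (by omega)]
        exact b1 l' (by omega) ⟨h2', by rw [e4, hp']⟩
    · obtain ⟨m, hmA, hmB, hw2, hwp⟩ := T.poc_witness (T.c 2) (T.c_mem 2)
        (T.c p) (T.c_mem p) l' (by omega) (by omega) heq2 h2' hp'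
      have hm01 : m = 0 ∨ m = 1 := by
        have := T.lt_of_len_lt (show (T.c m).length < (T.c 2).length from hmA)
        omega
      rcases hm01 with rfl | rfl
      · rw [hwp] at h0p; simp at h0p
      · rw [hwp] at a1; simp at a1
  -- the branch of c 1 continues by 0 above c 1
  have hsv : (T.c 1) ++ [false] ∈ hat T.nodes := by
    have hself : Par1 ((T.c 1).take ((T.c 0).length + 1))
        ((T.c 1).take ((T.c 0).length + 1)) := by
      refine ⟨(T.c 0).length, ?_, ?_, ?_, ?_⟩ <;>
        first
          | (simp [List.length_take]; omega)
          | (rw [pn_take (by omega)]; exact T.c_pn 0)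
    have hfr := T.freeze (n := 0)
      (mem_hat_of_prefix (List.take_prefix _ _) (mem_hat_of_mem (T.c_mem 1)))
      (by simp [List.length_take]; omega) hself (T.c 1) (T.c_mem 1)
      (List.take_prefix _ _) rfl
    exact hfr.1
  -- the branch of c 1 splits in the interval (l 1, l 2)
  have hnpv : ¬ Par1 ((T.c 1) ++ [false]) ((T.c 2).take ((T.c 1).length + 1)) := by
    rintro ⟨l', hA, hB, ha, hb⟩
    simp only [List.length_append, List.length_singleton] at hA
    have hb' : pn (T.c 2) l' = true := by rwa [pn_take (by omega)] at hb
    rcases eq_or_lt_of_le (Nat.lt_succ_iff.mp hA) with rfl | hlt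
    · rw [pn_concat] at ha; simp at ha
    · have ha' : pn (T.c 1) l' = true := by
        rwa [pn_eq_of_prefix (List.prefix_append _ _) hlt] at ha
      exact ns21 l' (le_of_lt hlt) ⟨hb', ha'⟩
  obtain ⟨dv, hdv, hsdv, hdvlen⟩ := (T.splitCrit 1 ((T.c 1) ++ [false]) hsv
    (by simp)).mpr hnpv
  have hdvlen' : (T.c 1).length < dv.length := by
    have := hsdv.length_le; simp at this; omega
  obtain ⟨⟨uv, ⟨huv, hduv, huvlen⟩, _⟩, hsidev⟩ := T.ext6 1 dv hdv hdvlen' hdvlen true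
  norm_num at huvlen
  obtain ⟨hXvhat, _⟩ := hsidev uv huv hduv huvlen
  obtain ⟨Xv, hXv, hXvpre⟩ := hXvhat
  -- the branch of c p splits in the interval (l 1, l 2)
  have hsp : (T.c p).take ((T.c 1).length + 1) ∈ hat T.nodes :=
    mem_hat_of_prefix (List.take_prefix _ _) (mem_hat_of_mem (T.c_mem p))
  have hsplen : ((T.c p).take ((T.c 1).length + 1)).length = (T.c 1).length + 1 := by
    simp [List.length_take]; omega
  have hnpp : ¬ Par1 ((T.c p).take ((T.c 1).length + 1))
      ((T.c 2).take ((T.c 1).length + 1)) := by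
    rintro ⟨l', hA, hB, ha, hb⟩
    rw [hsplen] at hA
    have ha' : pn (T.c p) l' = true := by rwa [pn_take (by omega)] at ha
    have hb' : pn (T.c 2) l' = true := by rwa [pn_take (by omega)] at hb
    exact ns2p l' (by omega) ⟨hb', ha'⟩
  obtain ⟨dp, hdp, hsdp, hdplen⟩ := (T.splitCrit 1 _ hsp hsplen).mpr hnpp
  have hdplen' : (T.c 1).length < dp.length := by
    have := hsdp.length_le; rw [hsplen] at this; omega
  obtain ⟨⟨up, ⟨hup, hdup, huplen⟩, _⟩, hsidep⟩ := T.ext6 1 dp hdp hdplen' hdplen true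
  norm_num at huplen
  obtain ⟨hXphat, _⟩ := hsidep up hup hdup huplen
  obtain ⟨Xp, hXp, hXppre⟩ := hXphat
  -- passing numbers of the two witnesses
  have hc1Xv : T.c 1 <+: Xv :=
    ((((List.prefix_append (T.c 1) [false]).trans hsdv).trans
      (List.prefix_append dv [true])).trans hduv).trans
      ((List.prefix_append uv [true]).trans hXvpre)
  have hsvXv : (T.c 1) ++ [false] <+: Xv :=
    ((hsdv.trans (List.prefix_append dv [true])).trans hduv).trans
      ((List.prefix_append uv [true]).trans hXvpre)
  have hspXp : (T.c p).take ((T.c 1).length + 1) <+: Xp :=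
    ((hsdp.trans (List.prefix_append dp [true])).trans hdup).trans
      ((List.prefix_append up [true]).trans hXppre)
  have hXvlen : (T.c 2).length < Xv.length := by
    have h := hXvpre.length_le
    rw [List.length_append, List.length_singleton, huvlen] at h
    omega
  have hXplen : (T.c 2).length < Xp.length := by
    have h := hXppre.length_le
    rw [List.length_append, List.length_singleton, huplen] at h
    omega
  have pnXv_L0 : pn Xv ((T.c 0).length) = true := by
    rw [pn_eq_of_prefix hc1Xv h01]; exact T.c_pn 0
  have pnXv_l : pn Xv l = true := by
    rw [pn_eq_of_prefix hc1Xv (by omega)]; exact h1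
  have pnXv_L1 : pn Xv ((T.c 1).length) = false := by
    rw [pn_eq_of_prefix hsvXv (by simp)]
    exact pn_concat (T.c 1) false
  have pnXv_L2 : pn Xv ((T.c 2).length) = true := by
    have : pn Xv ((T.c 2).length) = pn (uv ++ [true]) ((T.c 2).length) :=
      pn_eq_of_prefix hXvpre (by simp; omega)
    rw [this, ← huvlen]
    exact pn_concat uv true
  have pnXp_low : ∀ l' ≤ (T.c 1).length, pn Xp l' = pn (T.c p) l' := by
    intro l' hl'
    rw [pn_eq_of_prefix hspXp (by rw [hsplen]; omega), pn_take (by omega)]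
  have pnXp_L0 : pn Xp ((T.c 0).length) = false := by
    rw [pnXp_low _ (by omega)]; exact h0p
  have pnXp_l : pn Xp l = true := by rw [pnXp_low _ (by omega)]; exact hpl
  have pnXp_L2 : pn Xp ((T.c 2).length) = true := by
    have : pn Xp ((T.c 2).length) = pn (up ++ [true]) ((T.c 2).length) :=
      pn_eq_of_prefix hXppre (by simp; omega)
    rw [this, ← huplen]
    exact pn_concat up true
  -- the two witnesses diverge
  have hne : Xv.take (Xv.length ⊓ Xp.length) ≠ Xp.take (Xv.length ⊓ Xp.length) := by
    intro hcon
    have hmin : (T.c 0).length < Xv.length ⊓ Xp.length := by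
      simp [lt_min_iff]; omega
    have : pn Xv ((T.c 0).length) = pn Xp ((T.c 0).length) := by
      rw [← pn_take (t := Xv) hmin, hcon, pn_take hmin]
    rw [pnXv_L0, pnXp_L0] at this; simp at this
  -- least level with parallel 1's
  have hex1 : ∃ l', l' < Xv.length ∧ l' < Xp.length ∧
      pn Xv l' = true ∧ pn Xp l' = true :=
    ⟨l, by omega, by omega, pnXv_l, pnXp_l⟩
  have hleast1 : IsLeast {l' | l' < Xv.length ∧ l' < Xp.length ∧
      pn Xv l' = true ∧ pn Xp l' = true} (Nat.find hex1) :=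
    ⟨Nat.find_spec hex1, fun b hb => Nat.find_min' hex1 hb⟩
  have hfindle : Nat.find hex1 ≤ l := Nat.find_min' hex1 ⟨by omega, by omega, pnXv_l, pnXp_l⟩
  -- least witnessing coding node is c 2
  have hleast2 : IsLeast {m | (T.c m).length < Xv.length ∧ (T.c m).length < Xp.length ∧
      pn Xv ((T.c m).length) = true ∧ pn Xp ((T.c m).length) = true} 2 := by
    constructor
    · exact ⟨by omega, by omega, pnXv_L2, pnXp_L2⟩
    · intro m hm
      by_contra hcon
      push_neg at hcon
      have : m = 0 ∨ m = 1 := by omega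
      rcases this with rfl | rfl
      · rw [hm.2.2.2] at pnXp_L0; simp at pnXp_L0
      · rw [hm.2.2.1] at pnXv_L1; simp at pnXv_L1
  have hfinal := T.poc_min Xv hXv Xp hXp hne (Nat.find hex1) hleast1 2 hleast2
    (T.c 0) (T.c_mem 0) (Or.inr ⟨0, rfl⟩)
  exact hfinal ⟨by omega, by omega⟩



/-- Builder: given the invariant at stage `n` and a suitable node `u` at level
`l (n+1)` with immediate extension `b`, the invariant holds at stage `n+1` for
`u ++ [b]`. -/
private lemma build_inv (F : Finset ℕ)
    (hnoedge : ∀ m ∈ F, ∀ n ∈ F, m < n → pn (T.c n) ((T.c m).length) = false)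
    {n : ℕ} {t u : List Bool} {b : Bool}
    (htlen : t.length = (T.c n).length + 1)
    (htiff : ∀ k ≤ n, (pn t ((T.c k).length) = true ↔ k ∈ F))
    (htpar : ∀ p ∈ F, n < p → ∀ l < t.length, ¬ (pn t l = true ∧ pn (T.c p) l = true))
    (hu : u ∈ T.nodes) (htu : t <+: u) (hulen : u.length = (T.c (n + 1)).length)
    (hbhat : (u ++ [b]) ∈ hat T.nodes)
    (hbF : (b = true) ↔ n + 1 ∈ F)
    (hmid : ∀ p ∈ F, n + 1 < p → ∀ l, (T.c n).length < l → l < (T.c (n + 1)).length →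
      u.take (l + 1) = (T.c p).take (l + 1) → pn u l = true →
      pn (T.c p) l = true → False)
    (hsome : ∃ k, k ≤ n + 1 ∧ k ∈ F) :
    (u ++ [b]) ∈ hat T.nodes ∧ (u ++ [b]).length = (T.c (n + 1)).length + 1 ∧
    (∀ k ≤ n + 1, (pn (u ++ [b]) ((T.c k).length) = true ↔ k ∈ F)) ∧
    (∀ p ∈ F, n + 1 < p → ∀ l < (u ++ [b]).length,
      ¬ (pn (u ++ [b]) l = true ∧ pn (T.c p) l = true)) ∧
    ((∀ k ≤ n + 1, k ∉ F) → u ++ [b] = List.replicate ((T.c (n + 1)).length + 1) false) := by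
  have hLn : (T.c n).length < (T.c (n + 1)).length := T.len_lt (Nat.lt_succ_self n)
  have htub : t <+: u ++ [b] := htu.trans (List.prefix_append u [b])
  refine ⟨hbhat, by simp [hulen], ?_, ?_, ?_⟩
  · intro k hk
    rcases eq_or_lt_of_le hk with rfl | hklt
    · rw [← hulen, pn_concat]; exact hbF
    · have hkn : k ≤ n := by omega
      have hklen : (T.c k).length < t.length := by
        have := T.c_len_mono.monotone hkn; omega
      rw [pn_eq_of_prefix htub hklen]
      exact htiff k hkn
  · intro p hp hnp l hl hcon
    obtain ⟨h1, h2⟩ := hcon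
    have hlen' : l < (T.c (n + 1)).length + 1 := by simp [hulen] at hl; omega
    rcases lt_or_ge l t.length with hlt | hge
    · have h1' : pn t l = true := by rwa [pn_eq_of_prefix htub hlt] at h1
      exact htpar p hp (by omega) l hlt ⟨h1', h2⟩
    · rcases eq_or_lt_of_le (show l ≤ (T.c (n + 1)).length by omega) with heq | hlt2
      · subst heq
        rw [← hulen, pn_concat] at h1
        have hF1 : n + 1 ∈ F := hbF.mp h1
        have := hnoedge (n + 1) hF1 p hp hnp
        rw [this] at h2; simp at h2
      · have h1' : pn u l = true := by
          rwa [pn_eq_of_prefix (List.prefix_append u [b]) (by omega)] at h1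
        by_cases heq : u.take (l + 1) = (T.c p).take (l + 1)
        · exact hmid p hp hnp l (by omega) hlt2 heq h1' h2
        · have hLp : (T.c (n + 1)).length < (T.c p).length := T.len_lt hnp
          obtain ⟨m, hmA, hmB, hw1, hw2⟩ := T.poc_witness u hu (T.c p) (T.c_mem p) l
            (by omega) (by omega) heq h1' h2
          have hmn : m ≤ n := by
            have := T.lt_of_len_lt (show (T.c m).length < (T.c (n + 1)).length by omega)
            omega
          have hmt : (T.c m).length < t.length := by
            have := T.c_len_mono.monotone hmn; omega
          have hw1' : pn t ((T.c m).length) = true := by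
            rwa [pn_eq_of_prefix htu hmt] at hw1
          have hmF : m ∈ F := (htiff m hmn).mp hw1'
          have := hnoedge m hmF p hp (by omega)
          rw [this] at hw2; simp at hw2
  · intro hall
    obtain ⟨k, hk1, hk2⟩ := hsome
    exact absurd hk2 (hall k hk1)

/-- The main induction: the invariant can be realized at every stage. -/
private lemma inv_exists (F : Finset ℕ)
    (hnoedge : ∀ m ∈ F, ∀ n ∈ F, m < n → pn (T.c n) ((T.c m).length) = false) :
    ∀ n : ℕ, ∃ t : List Bool,
      t ∈ hat T.nodes ∧ t.length = (T.c n).length + 1 ∧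
      (∀ k ≤ n, (pn t ((T.c k).length) = true ↔ k ∈ F)) ∧
      (∀ p ∈ F, n < p → ∀ l < t.length, ¬ (pn t l = true ∧ pn (T.c p) l = true)) ∧
      ((∀ k ≤ n, k ∉ F) → t = List.replicate ((T.c n).length + 1) false) := by
  intro n
  induction n with
  | zero =>
    have h01 : (T.c 0).length < (T.c 1).length := T.len_lt one_pos
    by_cases h0 : 0 ∈ F
    · refine ⟨(T.c 1).take ((T.c 0).length + 1), ?_, ?_, ?_, ?_, ?_⟩
      · exact mem_hat_of_prefix (List.take_prefix _ _) (mem_hat_of_mem (T.c_mem 1))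
      · simp [List.length_take]; omega
      · intro k hk
        have hk0 : k = 0 := Nat.le_zero.mp hk
        subst hk0
        rw [pn_take (Nat.lt_succ_self _), T.c_pn 0]
        simp [h0]
      · intro p hp hp0 l hl hcon
        obtain ⟨h1, h2⟩ := hcon
        have hl' : l < (T.c 0).length + 1 := by
          simp [List.length_take] at hl; omega
        have h1' : pn (T.c 1) l = true := by rwa [pn_take (by omega)] at h1
        by_cases hp1 : p = 1
        · subst hp1
          have := hnoedge 0 h0 1 hp one_pos
          rw [T.c_pn 0] at this; simp at this
        by_cases hlL0 : l = (T.c 0).length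
        · subst hlL0
          have := hnoedge 0 h0 p hp hp0
          rw [this] at h2; simp at h2
        have hlt : l < (T.c 0).length := by omega
        by_cases hp2 : p = 2
        · subst hp2
          apply T.no_par_consec 0
          refine ⟨l, ?_, ?_, ?_, ?_⟩
          · simp [List.length_take]
            have := T.len_lt (show (1:ℕ) < 2 by omega); omega
          · simp [List.length_take]; omega
          · rwa [pn_take (by omega)]
          · rwa [pn_take (by omega)]
        have hp3 : 2 < p := by omega
        by_cases heq : (T.c 1).take (l + 1) = (T.c p).take (l + 1)
        · exact T.base_big hp3 (hnoedge 0 h0 p hp hp0) hlt h1' h2 heq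
        · have hLp : (T.c 0).length < (T.c p).length := T.len_lt hp0
          obtain ⟨m, hmA, hmB, hw1, hw2⟩ := T.poc_witness (T.c 1) (T.c_mem 1)
            (T.c p) (T.c_mem p) l (by omega) (by omega) heq h1' h2
          have hm0 : m = 0 := by
            have := T.lt_of_len_lt (show (T.c m).length < (T.c 1).length from hmA)
            omega
          subst hm0
          have := hnoedge 0 h0 p hp hp0
          rw [this] at hw2; simp at hw2
      · intro hall; exact absurd h0 (hall 0 le_rfl)
    · refine ⟨List.replicate ((T.c 0).length + 1) false, ?_, by simp, ?_, ?_, fun _ => rfl⟩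
      · exact mem_hat_of_prefix (replicate_prefix (by omega) false)
          (mem_hat_of_mem (T.zeros (T.c 1) (T.c_mem 1)))
      · intro k hk
        have hk0 : k = 0 := Nat.le_zero.mp hk
        subst hk0
        rw [pn_replicate]
        simp [h0]
      · intro p hp hpn l hl hcon
        rw [pn_replicate] at hcon
        simp at hcon
  | succ n ih =>
    obtain ⟨t, hthat, htlen, htiff, htpar, htzero⟩ := ih
    have hLn : (T.c n).length < (T.c (n + 1)).length := T.len_lt (Nat.lt_succ_self n)
    by_cases hex : ∃ k, k ≤ n ∧ k ∈ F
    · obtain ⟨k0, hk0n, hk0F⟩ := hex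
      have hsome : ∃ k, k ≤ n + 1 ∧ k ∈ F := ⟨k0, by omega, hk0F⟩
      have hmid : ∀ u : List Bool, t <+: u → ∀ p ∈ F, n + 1 < p → ∀ l,
          (T.c n).length < l → l < (T.c (n + 1)).length →
          u.take (l + 1) = (T.c p).take (l + 1) → pn u l = true →
          pn (T.c p) l = true → False := by
        intro u htu p hp hnp l hln hlL heq _ _
        have htcp : t <+: T.c p := by
          have e1 : t = u.take t.length := List.prefix_iff_eq_take.mp htu
          rw [List.prefix_iff_eq_take]
          refine e1.trans ?_
          rw [show u.take t.length = (u.take (l + 1)).take t.length by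
            rw [List.take_take, min_eq_left (by omega)], heq,
            List.take_take, min_eq_left (by omega)]
        have hk0lt : (T.c k0).length < t.length := by
          have := T.c_len_mono.monotone hk0n; omega
        have e3 : pn (T.c p) ((T.c k0).length) = pn t ((T.c k0).length) :=
          pn_eq_of_prefix htcp hk0lt
        rw [(htiff k0 hk0n).mpr hk0F] at e3
        rw [hnoedge k0 hk0F p hp (by omega)] at e3
        simp at e3
      by_cases hF1 : n + 1 ∈ F
      · have hnpar : ¬ Par1 t ((T.c (n + 1)).take ((T.c n).length + 1)) := by
          rintro ⟨l, hA, hB, h1, h2⟩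
          have hB' : l < (T.c n).length + 1 := by
            simp [List.length_take] at hB; omega
          have h2' : pn (T.c (n + 1)) l = true := by rwa [pn_take (by omega)] at h2
          exact htpar (n + 1) hF1 (Nat.lt_succ_self n) l (by omega) ⟨h1, h2'⟩
        obtain ⟨d, hd, htd, hdlen⟩ := (T.splitCrit n t hthat htlen).mpr hnpar
        have hdlen' : (T.c n).length < d.length := by
          have := htd.length_le; omega
        obtain ⟨⟨u, ⟨hu, hdu, hulen⟩, _⟩, hside⟩ := T.ext6 n d hd hdlen' hdlen true
        obtain ⟨hbhat, _⟩ := hside u hu hdu hulen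
        have htu : t <+: u := htd.trans ((List.prefix_append d [true]).trans hdu)
        exact ⟨u ++ [true], T.build_inv F hnoedge htlen htiff htpar hu htu hulen hbhat
          (by simp [hF1]) (hmid u htu) hsome⟩
      · by_cases hsplit : ∃ d, SplitsIn T.nodes d ∧ t <+: d ∧
            d.length < (T.c (n + 1)).length
        · obtain ⟨d, hd, htd, hdlen⟩ := hsplit
          have hdlen' : (T.c n).length < d.length := by
            have := htd.length_le; omega
          obtain ⟨⟨u, ⟨hu, hdu, hulen⟩, _⟩, hside⟩ := T.ext6 n d hd hdlen' hdlen false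
          obtain ⟨hbhat, _⟩ := hside u hu hdu hulen
          have htu : t <+: u := htd.trans ((List.prefix_append d [false]).trans hdu)
          exact ⟨u ++ [false], T.build_inv F hnoedge htlen htiff htpar hu htu hulen hbhat
            (by simp [hF1]) (hmid u htu) hsome⟩
        · obtain ⟨⟨u, ⟨hu, htu, hulen⟩, _⟩, hside⟩ := T.ext7 n t hthat htlen hsplit
          obtain ⟨hbhat, _⟩ := hside u hu htu hulen
          exact ⟨u ++ [false], T.build_inv F hnoedge htlen htiff htpar hu htu hulen hbhat
            (by simp [hF1]) (hmid u htu) hsome⟩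
    · push_neg at hex
      have htz : t = List.replicate ((T.c n).length + 1) false := htzero hex
      by_cases hF1 : n + 1 ∈ F
      · have hnpar : ¬ Par1 t ((T.c (n + 1)).take ((T.c n).length + 1)) := by
          rintro ⟨l, hA, hB, h1, h2⟩
          rw [htz, pn_replicate] at h1; simp at h1
        obtain ⟨d, hd, htd, hdlen⟩ := (T.splitCrit n t hthat htlen).mpr hnpar
        have hdlen' : (T.c n).length < d.length := by
          have := htd.length_le; omega
        obtain ⟨⟨u, ⟨hu, hdu, hulen⟩, huniq1⟩, hside⟩ := T.ext6 n d hd hdlen' hdlen true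
        obtain ⟨⟨u0, ⟨hu0, hdu0, hu0len⟩, huniq0⟩, _⟩ := T.ext6 n d hd hdlen' hdlen false
        obtain ⟨hbhat, hnothat⟩ := hside u hu hdu hulen
        have htu : t <+: u := htd.trans ((List.prefix_append d [true]).trans hdu)
        refine ⟨u ++ [true], T.build_inv F hnoedge htlen htiff htpar hu htu hulen hbhat
          (by simp [hF1]) ?_ ⟨n + 1, le_rfl, hF1⟩⟩
        intro p hp hnp l hln hlL heq h1 h2
        have hLp : (T.c (n + 1)).length < (T.c p).length := T.len_lt hnp
        have htcp : t <+: T.c p := by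
          have e1 : t = u.take t.length := List.prefix_iff_eq_take.mp htu
          rw [List.prefix_iff_eq_take]
          exact e1.trans (by
            rw [show u.take t.length = (u.take (l + 1)).take t.length by
              rw [List.take_take, min_eq_left (by omega)], heq,
              List.take_take, min_eq_left (by omega)])
        have hw : (T.c p).take ((T.c (n + 1)).length) ∈ T.nodes :=
          T.c_take_mem (le_of_lt hLp)
        have hwlen : ((T.c p).take ((T.c (n + 1)).length)).length
            = (T.c (n + 1)).length := by
          simp [List.length_take]; omega
        have htw : t <+: (T.c p).take ((T.c (n + 1)).length) :=
          prefix_take_of_prefix htcp (by omega)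
        have hdw : d <+: (T.c p).take ((T.c (n + 1)).length) :=
          T.no_diverge hd hdlen' hdlen hw hwlen htd htw (by omega)
        have hz : List.replicate ((T.c (n + 1)).length) false ∈ T.nodes :=
          T.zeros (T.c (n + 1)) (T.c_mem (n + 1))
        have htzp : t <+: List.replicate ((T.c (n + 1)).length) false := by
          rw [htz]; exact replicate_prefix (by omega) false
        have hdz : d <+: List.replicate ((T.c (n + 1)).length) false :=
          T.no_diverge hd hdlen' hdlen hz (by simp) htd htzp (by omega)
        have hdz0 : d ++ [false] <+: List.replicate ((T.c (n + 1)).length) false := by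
          have e1 : (List.replicate ((T.c (n + 1)).length) false).take d.length = d :=
            take_eq_of_prefix hdz
          have e2 := take_succ_pn (t := List.replicate ((T.c (n + 1)).length) false)
            (k := d.length) (by simp; omega)
          rw [e1, pn_replicate] at e2
          rw [← e2]; exact List.take_prefix _ _
        have hwbit : d ++ [pn ((T.c p).take ((T.c (n + 1)).length)) d.length]
            <+: (T.c p).take ((T.c (n + 1)).length) := by
          have e1 : ((T.c p).take ((T.c (n + 1)).length)).take d.length = d :=
            take_eq_of_prefix hdw
          have e2 := take_succ_pn (t := (T.c p).take ((T.c (n + 1)).length))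
            (k := d.length) (by rw [hwlen]; omega)
          rw [e1] at e2
          rw [← e2]; exact List.take_prefix _ _
        rcases Bool.eq_false_or_eq_true
            (pn ((T.c p).take ((T.c (n + 1)).length)) d.length) with hbit | hbit
        · -- the branch of `c p` goes through `d ++ [true]`, hence through `u`
          rw [hbit] at hwbit
          have hwu : (T.c p).take ((T.c (n + 1)).length) = u :=
            huniq1 _ ⟨hw, hwbit, hwlen⟩
          have hcpb : (T.c p).take ((T.c (n + 1)).length + 1)
              = (T.c p).take ((T.c (n + 1)).length)
                ++ [pn (T.c p) ((T.c (n + 1)).length)] :=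
            take_succ_pn (by omega)
          rcases Bool.eq_false_or_eq_true (pn (T.c p) ((T.c (n + 1)).length))
              with hb2 | hb2
          · have := hnoedge (n + 1) hF1 p hp hnp
            rw [this] at hb2; simp at hb2
          · apply hnothat
            have e4 : (T.c p).take ((T.c (n + 1)).length + 1) ∈ hat T.nodes :=
              mem_hat_of_prefix (List.take_prefix _ _) (mem_hat_of_mem (T.c_mem p))
            rw [hcpb, hb2, hwu] at e4
            simpa using e4
        · -- the branch of `c p` goes through `d ++ [false]`, hence is all zeros
          rw [hbit] at hwbit
          have hwu0 : (T.c p).take ((T.c (n + 1)).length) = u0 :=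
            huniq0 _ ⟨hw, hwbit, hwlen⟩
          have hzu0 : List.replicate ((T.c (n + 1)).length) false = u0 :=
            huniq0 _ ⟨hz, hdz0, by simp⟩
          have e3 : pn (T.c p) l = pn ((T.c p).take ((T.c (n + 1)).length)) l :=
            (pn_take (by omega)).symm
          rw [hwu0, ← hzu0, pn_replicate] at e3
          rw [h2] at e3; simp at e3
      · refine ⟨List.replicate ((T.c (n + 1)).length + 1) false, ?_, by simp, ?_, ?_,
          fun _ => rfl⟩
        · have hlt : (T.c (n + 1)).length + 1 ≤ (T.c (n + 2)).length := by
            have := T.len_lt (show n + 1 < n + 2 by omega); omega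
          exact mem_hat_of_prefix (replicate_prefix hlt false)
            (mem_hat_of_mem (T.zeros (T.c (n + 2)) (T.c_mem (n + 2))))
        · intro k hk
          rw [pn_replicate]
          constructor
          · intro h; simp at h
          · intro hkF
            exfalso
            rcases eq_or_lt_of_le hk with rfl | hk'
            · exact hF1 hkF
            · exact hex k (by omega) hkF
        · intro p hp hpn l hl hcon
          rw [pn_replicate] at hcon
          simp at hcon


end StrongCodingTree


/-- Let `A = r_{m+1}(T)` be the finite strong coding tree consisting of
the initial part of a strong coding tree `T` up to its `(N-1)`-st coding node, and let
`A⁺` be the set of immediate extensions in `T̂` of the maximal nodes of `A`, i.e. the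
nodes of `T̂` of length `l_{N-1} + 1`.  Then for every `F ⊆ {0,…,N-1}` such that
`{c n : n ∈ F}` codes no edges, there is `t ∈ A⁺` such that for all `n < N`,
`t(l n) = 1` iff `n ∈ F`. -/
theorem finite_sct_extension (T : StrongCodingTree) (N : ℕ) (hN : 0 < N)
    (F : Finset ℕ) (hF : ∀ n ∈ F, n < N)
    (hnoedge : ∀ m ∈ F, ∀ n ∈ F, m < n → pn (T.c n) ((T.c m).length) = false) :
    ∃ t ∈ hat T.nodes, t.length = (T.c (N - 1)).length + 1 ∧
      ∀ n < N, (pn t ((T.c n).length) = true ↔ n ∈ F) := by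
  obtain ⟨t, h1, h2, h3, -, -⟩ := T.inv_exists F hnoedge (N - 1)
  exact ⟨t, h1, h2, fun n hn => h3 n (by omega)⟩
end

section
/- Erdős–Rado theorem: for every r < ω and infinite cardinal μ, the partition relation (ℶ_r(μ))⁺ → (μ⁺)^{r+1}_μ holds; that is, for every coloring of the (r+1)-element subsets of (ℶ_r(μ))⁺ into μ many colors, there is a subset of cardinality μ⁺ all of whose (r+1)-element subsets get the same color. -/
open Cardinal

/-- Finite iteration of the beth operation: `iterBeth r μ = ℶ_r(μ)`. -/
def iterBeth : ℕ → Cardinal → Cardinal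
  | 0, μ => μ
  | r + 1, μ => 2 ^ iterBeth r μ

universe u

/-!
Induction on `r`; for `r = 0` this is the pigeonhole principle for the regular cardinal `μ⁺`.
For the step let `κ = ℶ_r(μ)` and `2 ^ κ < #α`. The type of `y` over `B` is the colouring
`t ↦ f (insert y t)` of the finite `t ⊆ B`; over a set of size `κ` there are at most `2 ^ κ` types.
A set `A` of size `2 ^ κ` that realises (outside `B`) every type over each of its `κ`-small subsets
`B` that is realised at all misses some point `x`. Realising inside `A`, recursively, the type of
`x` over the points already chosen gives a sequence of length `κ⁺` each of whose terms looks like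
`x` to the earlier terms. The induction hypothesis for `t ↦ f (insert x t)` on this sequence gives
a set of size `μ⁺` that is homogeneous for `f` as well: in an `(r + 2)`-subset the last element
may be replaced by `x`.
-/

open Set

lemma le_iterBeth (r : ℕ) (μ : Cardinal.{u}) : μ ≤ iterBeth r μ := by
  induction r with
  | zero => exact le_rfl
  | succ r ih => exact ih.trans (cantor _).le

def IsHomogeneous {α β : Type*} (f : Finset α → β) (n : ℕ) (X : Set α) (b : β) : Prop :=
  ∀ s : Finset α, ↑s ⊆ X → s.card = n → f s = b

namespace Cardinal

lemma mk_iUnion_le_of_le {α ι : Type u} {s : ι → Set α} {θ : Cardinal.{u}} (hθ : ℵ₀ ≤ θ)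
    (hι : #ι ≤ θ) (hs : ∀ i, #(s i) ≤ θ) : #(⋃ i, s i) ≤ θ :=
  (mk_iUnion_le s).trans <| (mul_le_mul' hι (ciSup_le' hs)).trans (mul_eq_self hθ).le

lemma mk_finset_le_max (α : Type u) : #(Finset α) ≤ max ℵ₀ #α := by
  classical
  exact (mk_le_of_surjective List.toFinset_surjective).trans (mk_list_le_max α)

lemma mk_Iio_toType_succ_ord_le {κ : Cardinal.{u}} (w : (Order.succ κ).ord.ToType) :
    #(Iio w) ≤ κ :=
  Order.lt_succ_iff.mp (by simpa using mk_Iio_lt w)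

lemma exists_forall_lt_toType_succ_ord {κ : Cardinal.{u}} (hκ : ℵ₀ ≤ κ)
    {s : Set (Order.succ κ).ord.ToType} (hs : #s ≤ κ) : ∃ w, ∀ v ∈ s, v < w := by
  refine not_isCofinal_iff.mp fun hcof => (hs.trans_lt (Order.lt_succ κ)).not_ge ?_
  simpa [Ordinal.cof_toType, (isRegular_succ hκ).cof_ord] using Order.cof_le hcof

lemma mk_finset_arrow_le {α β : Type u} {κ : Cardinal.{u}} (hκ : ℵ₀ ≤ κ) (hα : #α ≤ κ)
    (hβ : #β ≤ κ) : #(Finset α → β) ≤ 2 ^ κ :=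
  calc #(Finset α → β) = #β ^ #(Finset α) := (power_def _ _).symm
    _ ≤ κ ^ κ := (power_le_power_right hβ).trans <| power_le_power_left
        (aleph0_pos.trans_le hκ).ne' ((mk_finset_le_max α).trans (max_le hκ hα))
    _ = 2 ^ κ := power_self_eq hκ

end Cardinal

lemma WellFoundedLT.exists_forall_restrict {W γ : Type*} [LinearOrder W] [WellFoundedLT W]
    (P : ∀ w : W, (Iio w → γ) → γ → Prop) (h : ∀ w g, ∃ a, P w g a) :
    ∃ F : W → γ, ∀ w, P w (fun v => F v) (F w) := by
  refine ⟨wellFounded_lt.fix fun w rec => (h w fun v => rec v v.2).choose, fun w => ?_⟩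
  rw [wellFounded_lt.fix_eq]
  exact (h w _).choose_spec

/-- Iterate `step` along `κ⁺`: by regularity of `κ⁺`, a `κ`-small subset of the union lies
in the union of an initial segment of the stages. -/
lemma exists_mk_le_forall_subset_step_subset {α : Type u} {κ θ : Cardinal.{u}} (hκ : ℵ₀ ≤ κ)
    (hθ : Order.succ κ ≤ θ) (step : Set α → Set α)
    (hstep : ∀ S : Set α, #S ≤ θ → #(step S) ≤ θ) :
    ∃ A : Set α, #A ≤ θ ∧ ∀ B ⊆ A, #B ≤ κ → ∃ S, B ⊆ S ∧ step S ⊆ A := by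
  have hθ₀ : ℵ₀ ≤ θ := hκ.trans ((Order.le_succ κ).trans hθ)
  have hW : #(Order.succ κ).ord.ToType ≤ θ := by simpa using hθ
  obtain ⟨stage, hstage⟩ := WellFoundedLT.exists_forall_restrict (W := (Order.succ κ).ord.ToType)
    (fun w prev S => S = step (⋃ v, prev v)) fun w prev => ⟨_, rfl⟩
  have hmk (w) : #(stage w) ≤ θ := by
    induction w using WellFoundedLT.induction with
    | ind w ih =>
      rw [hstage w]
      exact hstep _ <| mk_iUnion_le_of_le hθ₀ ((mk_set_le _).trans hW) fun v => ih v v.2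
  refine ⟨⋃ w, stage w, mk_iUnion_le_of_le hθ₀ hW hmk, fun B hBA hB => ?_⟩
  choose w₀ hw₀ using fun b : B => mem_iUnion.mp (hBA b.2)
  obtain ⟨w, hw⟩ := exists_forall_lt_toType_succ_ord hκ (mk_range_le.trans hB)
  refine ⟨⋃ v : Iio w, stage v, fun b hb => ?_, ?_⟩
  · exact mem_iUnion.mpr ⟨⟨w₀ ⟨b, hb⟩, hw _ (mem_range_self _)⟩, hw₀ ⟨b, hb⟩⟩
  · rw [← hstage w]
    exact subset_iUnion stage w

section Types

variable {α β : Type u} [DecidableEq α] (f : Finset α → β)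

def typeOver (B : Set α) (y : α) : Finset B → β :=
  fun t => f (insert y (t.map (Function.Embedding.subtype (· ∈ B))))

variable {f} in
lemma apply_insert_eq_of_typeOver_eq {B : Set α} {y z : α} (h : typeOver f B y = typeOver f B z)
    {t : Finset α} (ht : ↑t ⊆ B) : f (insert y t) = f (insert z t) := by
  classical
  simpa [typeOver, Finset.subtype_map_of_mem ht] using congrFun h (t.subtype (· ∈ B))

def IsTypeClosed (κ : Cardinal.{u}) (A : Set α) : Prop :=
  ∀ B ⊆ A, #B ≤ κ → ∀ y ∉ B, ∃ z ∈ A, z ∉ B ∧ typeOver f B z = typeOver f B y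

lemma exists_isTypeClosed [Nonempty α] {κ : Cardinal.{u}} (hκ : ℵ₀ ≤ κ) (hβ : #β ≤ κ) :
    ∃ A : Set α, #A ≤ 2 ^ κ ∧ IsTypeClosed f κ A := by
  let realizer (B : Set α) (τ : Finset B → β) : α :=
    Classical.epsilon fun z => z ∉ B ∧ typeOver f B z = τ
  have h2κ : ℵ₀ ≤ 2 ^ κ := hκ.trans (cantor κ).le
  have hpow : ((2 : Cardinal.{u}) ^ κ) ^ κ = 2 ^ κ := by rw [← power_mul, mul_eq_self hκ]
  obtain ⟨A, hA, hclosed⟩ := exists_mk_le_forall_subset_step_subset hκ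
    (Order.succ_le_of_lt (cantor κ))
    (fun S => ⋃ B : {B : Set α // B ⊆ S ∧ #B ≤ κ}, range (realizer B.1)) fun S hS => by
      refine mk_iUnion_le_of_le h2κ ((mk_bounded_subset_le S κ).trans ?_) fun B =>
        mk_range_le.trans (mk_finset_arrow_le hκ B.2.2 hβ)
      exact (power_le_power_right (max_le hS h2κ)).trans hpow.le
  refine ⟨A, hA, fun B hBA hB y hy => ?_⟩
  obtain ⟨S, hBS, hSA⟩ := hclosed B hBA hB
  have hspec : realizer B (typeOver f B y) ∉ B ∧
      typeOver f B (realizer B (typeOver f B y)) = typeOver f B y :=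
    Classical.epsilon_spec (p := fun z => z ∉ B ∧ typeOver f B z = typeOver f B y) ⟨y, hy, rfl⟩
  exact ⟨_, hSA (mem_iUnion.mpr ⟨⟨B, hBS, hB⟩, mem_range_self _⟩), hspec⟩

end Types

section EndHomogeneous

variable {α β W : Type u} [DecidableEq α] [LinearOrder W] (f : Finset α → β)

def IsEndHomogeneous (x : α) (g : W → α) : Prop :=
  ∀ w (t : Finset α), ↑t ⊆ g '' Iio w → f (insert (g w) t) = f (insert x t)

lemma exists_isEndHomogeneous [WellFoundedLT W] {κ : Cardinal.{u}} {A : Set α}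
    (hA : IsTypeClosed f κ A) (hW : ∀ w : W, #(Iio w) ≤ κ) {x : α} (hx : x ∉ A) :
    ∃ g : W ↪ α, IsEndHomogeneous f x g := by
  obtain ⟨g, hg⟩ := WellFoundedLT.exists_forall_restrict
    (fun w (prev : Iio w → A) (a : A) => (a : α) ∉ range (Subtype.val ∘ prev) ∧
      typeOver f (range (Subtype.val ∘ prev)) a = typeOver f (range (Subtype.val ∘ prev)) x)
    fun w prev => by
      obtain ⟨z, hzA, hz⟩ := hA _ (range_subset_iff.mpr fun v => (prev v).2)
        (mk_range_le.trans (hW w)) x fun ⟨v, hv⟩ => hx (hv ▸ (prev v).2)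
      exact ⟨⟨z, hzA⟩, hz⟩
  have hrange (w : W) : range (Subtype.val ∘ fun v : Iio w => g v) = (Subtype.val ∘ g) '' Iio w :=
    (image_eq_range (Subtype.val ∘ g) (Iio w)).symm
  refine ⟨⟨Subtype.val ∘ g, fun v w hvw => ?_⟩, fun w t ht => ?_⟩
  · by_contra hne
    rcases lt_or_gt_of_ne hne with h | h
    · exact (hg w).1 ⟨⟨v, h⟩, hvw⟩
    · exact (hg v).1 ⟨⟨w, h⟩, hvw.symm⟩
  · exact apply_insert_eq_of_typeOver_eq (hg w).2 (ht.trans (hrange w).superset)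

lemma exists_isEndHomogeneous_of_two_pow_lt {κ : Cardinal.{u}} (hκ : ℵ₀ ≤ κ) (hβ : #β ≤ κ)
    (hα : 2 ^ κ < #α) :
    ∃ (x : α) (g : (Order.succ κ).ord.ToType ↪ α), IsEndHomogeneous f x g := by
  have : Nonempty α := mk_ne_zero_iff.mp (zero_le.trans_lt hα).ne'
  obtain ⟨A, hA, hclosed⟩ := exists_isTypeClosed f hκ hβ
  obtain ⟨x, hx⟩ : ∃ x, x ∉ A := by
    by_contra! h
    exact (hA.trans_lt hα).ne (by rw [eq_univ_of_forall h, mk_univ])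
  exact ⟨x, exists_isEndHomogeneous f hclosed mk_Iio_toType_succ_ord_le hx⟩

/-- Stepping up: an `(n + 1)`-set is its last element together with an `n`-set below it. -/
lemma IsHomogeneous.image_of_isEndHomogeneous {x : α} {g : W ↪ α}
    (hg : IsEndHomogeneous f x g) {n : ℕ} {Y : Set W} {b : β}
    (hY : IsHomogeneous (fun t => f (insert x (t.map g))) n Y b) :
    IsHomogeneous f (n + 1) (g '' Y) b := by
  classical
  intro s hs hcard
  obtain ⟨s', hs'Y, rfl⟩ := Finset.subset_set_image_iff.mp hs
  rw [← Finset.map_eq_image] at hcard ⊢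
  rw [Finset.card_map] at hcard
  have hne : s'.Nonempty := Finset.card_pos.mp (by omega)
  set w := s'.max' hne
  have hsplit : s' = insert w (s'.erase w) := (Finset.insert_erase (s'.max'_mem hne)).symm
  rw [hsplit, Finset.map_insert, hg w]
  · refine hY _ ((Finset.coe_subset.mpr (s'.erase_subset w)).trans hs'Y) ?_
    rw [Finset.card_erase_of_mem (s'.max'_mem hne), hcard, Nat.add_sub_cancel]
  · intro a ha
    obtain ⟨v, hv, rfl⟩ := Finset.mem_map.mp (Finset.mem_coe.mp ha)
    exact ⟨v, s'.lt_max'_of_mem_erase_max' hne hv, rfl⟩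

end EndHomogeneous

lemma exists_isHomogeneous_one {α β : Type u} {μ : Cardinal.{u}} (hμ : ℵ₀ ≤ μ)
    (hα : Order.succ μ ≤ #α) (hβ : #β ≤ μ) (f : Finset α → β) :
    ∃ X : Set α, #X = Order.succ μ ∧ ∃ b, IsHomogeneous f 1 X b := by
  obtain ⟨b, hb⟩ := infinite_pigeonhole_card (fun a => f {a}) (Order.succ μ) hα
    (hμ.trans (Order.le_succ μ))
    (by rw [(isRegular_succ hμ).cof_ord]; exact hβ.trans_lt (Order.lt_succ μ))
  obtain ⟨X, hXb, hX⟩ := le_mk_iff_exists_subset.mp hb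
  refine ⟨X, hX, b, fun s hs hcard => ?_⟩
  obtain ⟨a, rfl⟩ := Finset.card_eq_one.mp hcard
  exact hXb (hs (Finset.mem_coe.mpr (Finset.mem_singleton_self a)))

/-- The Erdős–Rado theorem: for `r < ω` and infinite `μ`,
`(ℶ_r(μ))⁺ → (μ⁺)^{r+1}_μ`: any coloring of the `(r+1)`-element subsets of a set of
cardinality `(ℶ_r(μ))⁺` into at most `μ` colors has a homogeneous set of
cardinality `μ⁺`. -/
theorem erdos_rado (r : ℕ) (μ : Cardinal.{u}) (hμ : ℵ₀ ≤ μ)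
    {α : Type u} (hα : #α = Order.succ (iterBeth r μ))
    {β : Type u} (hβ : #β ≤ μ)
    (f : Finset α → β) :
    ∃ X : Set α, #X = Order.succ μ ∧
      ∃ b : β, ∀ s : Finset α, ↑s ⊆ X → s.card = r + 1 → f s = b := by
  classical
  induction r generalizing α β with
  | zero => exact exists_isHomogeneous_one hμ hα.ge hβ f
  | succ r ih =>
    obtain ⟨x, g, hg⟩ := exists_isEndHomogeneous_of_two_pow_lt f
      (hμ.trans (le_iterBeth r μ)) (hβ.trans (le_iterBeth r μ))
      (by rw [hα]; exact Order.lt_succ _)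
    obtain ⟨Y, hY, b, hYb⟩ := ih (mk_ord_toType _) hβ fun t => f (insert x (t.map g))
    exact ⟨g '' Y, by rw [mk_image_eq g.injective, hY], b,
      IsHomogeneous.image_of_isEndHomogeneous f hg hYb⟩
end

section
/- In a strong coding tree, the meet closure of any antichain of coding nodes is strongly diagonal; in particular every antichain of coding nodes in a strong coding tree is a strongly diagonal set. -/
lemma meet_self : ∀ a : List Bool, meet a a = a
  | [] => rfl
  | x :: xs => by simp [meet, meet_self xs]

lemma meet_prefix_left : ∀ a b : List Bool, meet a b <+: a
  | [], _ => by simp [meet]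
  | _ :: _, [] => by simp [meet]
  | x :: xs, y :: ys => by
    by_cases h : x = y
    · simpa [meet, h] using (meet_prefix_left xs ys)
    · simp [meet, h]

lemma meet_key : ∀ a b : List Bool, ¬ a <+: b → ¬ b <+: a →
    ∃ x y : Bool, x ≠ y ∧ (meet a b ++ [x]) <+: a ∧ (meet a b ++ [y]) <+: b
  | [], b, h, _ => absurd (List.nil_prefix) h
  | a :: as, [], _, h => absurd (List.nil_prefix) h
  | x :: xs, y :: ys, h1, h2 => by
    by_cases h : x = y
    · subst h
      rw [List.cons_prefix_cons] at h1 h2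
      simp only [true_and] at h1 h2
      obtain ⟨u, v, huv, hu, hv⟩ := meet_key xs ys h1 h2
      refine ⟨u, v, huv, ?_, ?_⟩
      · simpa [meet, List.cons_prefix_cons] using hu
      · simpa [meet, List.cons_prefix_cons] using hv
    · exact ⟨x, y, h, by simp [meet, h], by simp [meet, h, List.cons_prefix_cons]⟩

/-- In a strong coding tree, every antichain `Z` of coding nodes is
strongly diagonal: its meet closure is transversal (distinct meets have distinct
lengths), and for `s ≠ t` and `u` in `Z`, if `|s ∧ t| < |u|` and `s ∧ t` is not an
initial segment of `u`, then `u(|s ∧ t|) = 0`. -/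
theorem antichain_of_coding_nodes_strongly_diagonal (T : StrongCodingTree)
    (Z : Set (List Bool)) (hZc : Z ⊆ Set.range T.c)
    (hanti : ∀ s ∈ Z, ∀ t ∈ Z, s <+: t → s = t) :
    (∀ s ∈ Z, ∀ t ∈ Z, ∀ u ∈ Z, ∀ v ∈ Z,
      (meet s t).length = (meet u v).length → meet s t = meet u v) ∧
    (∀ s ∈ Z, ∀ t ∈ Z, ∀ u ∈ Z, s ≠ t → (meet s t).length < u.length →
      ¬ (meet s t <+: u) → pn u ((meet s t).length) = false) := by
  have hnodes : ∀ z ∈ Z, z ∈ T.nodes := by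
    intro z hz
    obtain ⟨n, rfl⟩ := hZc hz
    exact T.c_mem n
  have hsplit : ∀ s ∈ Z, ∀ t ∈ Z, s ≠ t → SplitsIn T.nodes (meet s t) := by
    intro s hs t ht hne
    have h1 : ¬ s <+: t := fun h => hne (hanti s hs t ht h)
    have h2 : ¬ t <+: s := fun h => hne (hanti t ht s hs h).symm
    obtain ⟨x, y, hxy, hx, hy⟩ := meet_key s t h1 h2
    cases x
    · cases y
      · exact absurd rfl hxy
      · exact ⟨⟨s, hnodes s hs, hx⟩, ⟨t, hnodes t ht, hy⟩⟩
    · cases y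
      · exact ⟨⟨t, hnodes t ht, hy⟩, ⟨s, hnodes s hs, hx⟩⟩
      · exact absurd rfl hxy
  have hcrit : ∀ s ∈ Z, ∀ t ∈ Z, IsCritical T.nodes T.c (meet s t) := by
    intro s hs t ht
    by_cases hst : s = t
    · subst hst
      obtain ⟨n, hn⟩ := hZc hs
      exact Or.inr ⟨n, by rw [meet_self]; exact hn.symm⟩
    · exact Or.inl (hsplit s hs t ht hst)
  constructor
  · intro s hs t ht u hu v hv hlen
    exact T.skew _ (T.tree.1 s (hnodes s hs) t (hnodes t ht))
      _ (T.tree.1 u (hnodes u hu) v (hnodes v hv))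
      (hcrit s hs t ht) (hcrit u hu v hv) hlen
  · intro s hs t ht u hu hne hlt hnp
    exact T.stronglySkew _ (hsplit s hs t ht hne) u (hnodes u hu) hlt hnp
end
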